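/- arXiv:1901.06702 — 9 statements merged into one kernel-verified Lean document; each statement's English description precedes it below -/
import Mathlib

section
/- Let m, n, k be positive integers with k ≤ n. If T ⊆ {0,1}^{mn} is an (mn, mk)-universal set, then there exists an (n, k, 2^m)-universal set of the same cardinality. -/
/-!
Group the `m * n` binary coordinates into `n` blocks of `m` and read each block as the digit
expansion of a number below `2 ^ m`. This bijection sends a configuration on a set `S` of `k`
blocks to a configuration on the `m * k` underlying binary coordinates, so universality of `T`
for `m * k` coordinates gives universality of its image for `k` blocks.
-/

/-- `T ⊆ {0,…,b-1}^n` is an `(n,k,b)`-universal set: for every index set `S` of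
cardinality `k`, the projection of `T` onto `S` contains all configurations. -/
def IsUniversal {n b : ℕ} (k : ℕ) (T : Finset (Fin n → Fin b)) : Prop :=
  ∀ S : Finset (Fin n), S.card = k → ∀ f : Fin n → Fin b, ∃ x ∈ T, ∀ i ∈ S, x i = f i

/-- The blocks are consecutive runs of `m` coordinates. -/
def blockIndex (m n : ℕ) : Fin n × Fin m ≃ Fin (m * n) :=
  finProdFinEquiv.trans (finCongr (Nat.mul_comm n m))

def digitEquiv (m n b : ℕ) : (Fin (m * n) → Fin b) ≃ (Fin n → Fin (b ^ m)) :=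
  (((blockIndex m n).symm.arrowCongr (Equiv.refl _)).trans (Equiv.curry _ _ _)).trans
    (Equiv.piCongrRight fun _ => finFunctionFinEquiv)

theorem digitEquiv_apply {m n b : ℕ} (x : Fin (m * n) → Fin b) (i : Fin n) :
    digitEquiv m n b x i = finFunctionFinEquiv fun j => x (blockIndex m n (i, j)) :=
  rfl

theorem digitEquiv_apply_eq_iff {m n b : ℕ} (x y : Fin (m * n) → Fin b) (i : Fin n) :
    digitEquiv m n b x i = digitEquiv m n b y i ↔
      ∀ j, x (blockIndex m n (i, j)) = y (blockIndex m n (i, j)) := by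
  rw [digitEquiv_apply, digitEquiv_apply, finFunctionFinEquiv.injective.eq_iff, funext_iff]

theorem IsUniversal.map_digitEquiv {m n b k : ℕ} {T : Finset (Fin (m * n) → Fin b)}
    (hT : IsUniversal (m * k) T) :
    IsUniversal k (T.map (digitEquiv m n b).toEmbedding) := by
  intro S hS f
  set S' := (S ×ˢ Finset.univ).map (blockIndex m n).toEmbedding
  have hS' : S'.card = m * k := by
    rw [Finset.card_map, Finset.card_product, hS, Finset.card_univ, Fintype.card_fin, mul_comm]
  obtain ⟨x, hxT, hx⟩ := hT S' hS' ((digitEquiv m n b).symm f)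
  refine ⟨digitEquiv m n b x, Finset.mem_map_of_mem _ hxT, fun i hi => ?_⟩
  conv_rhs => rw [← (digitEquiv m n b).apply_symm_apply f]
  rw [digitEquiv_apply_eq_iff]
  exact fun j => hx _ (Finset.mem_map_of_mem _ (Finset.mem_product.2 ⟨hi, Finset.mem_univ j⟩))

theorem stmt_1_general (m n k : ℕ)
    (T : Finset (Fin (m * n) → Fin 2)) (hT : IsUniversal (m * k) T) :
    ∃ T' : Finset (Fin n → Fin (2 ^ m)), IsUniversal k T' ∧ T'.card = T.card :=
  ⟨_, hT.map_digitEquiv, Finset.card_map _⟩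

theorem stmt_1 (m n k : ℕ) (hm : 1 ≤ m) (hk : 1 ≤ k) (hkn : k ≤ n)
    (T : Finset (Fin (m * n) → Fin 2)) (hT : IsUniversal (m * k) T) :
    ∃ T' : Finset (Fin n → Fin (2 ^ m)), IsUniversal k T' ∧ T'.card = T.card :=
  stmt_1_general m n k T hT
end

section
/- For positive integers 1 ≤ k ≤ n and b ≥ 2, there exists an (n,k,b)-universal set of size at most ⌈k b^k log(e b n / k)⌉. -/
open Finset Fintype Real

section Counting

variable {ι α : Type*} [Fintype ι] [DecidableEq ι]

lemma card_piFinset_ite (S : Finset ι) (s t : ι → Finset α) :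
    #(piFinset fun i => if i ∈ S then s i else t i) = (∏ i ∈ S, #(s i)) * ∏ i ∈ Sᶜ, #(t i) := by
  rw [card_piFinset, prod_apply_ite]
  simp [compl_eq_univ_sdiff, filter_not]

variable [Fintype α]

lemma card_filter_eqOn (S : Finset ι) (f : ι → α)
    [DecidablePred fun x : ι → α => ∀ i ∈ S, x i = f i] :
    #{x : ι → α | ∀ i ∈ S, x i = f i} = card α ^ (card ι - #S) := by
  have : ({x : ι → α | ∀ i ∈ S, x i = f i} : Finset _) =
      piFinset fun i => if i ∈ S then {f i} else univ := by
    ext x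
    simp only [mem_filter_univ, mem_piFinset]
    refine ⟨fun h i => ?_, fun h i hi => by simpa [hi] using h i⟩
    split_ifs with hi <;> simp [h i, hi]
  rw [this, card_piFinset_ite]
  simp [card_compl]

lemma card_filter_forall_not_eqOn [DecidableEq α] {κ : Type*} [Fintype κ] [DecidableEq κ]
    (S : Finset ι) (f : ι → α) [DecidablePred fun t : κ → ι → α => ∀ j, ¬ ∀ i ∈ S, t j i = f i] :
    #{t : κ → ι → α | ∀ j, ¬ ∀ i ∈ S, t j i = f i} =
      (card α ^ card ι - card α ^ (card ι - #S)) ^ card κ := by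
  have : ({t : κ → ι → α | ∀ j, ¬ ∀ i ∈ S, t j i = f i} : Finset _) =
      piFinset fun _ => {x | ¬ ∀ i ∈ S, x i = f i} := by
    ext t; simp
  rw [this, card_piFinset, prod_const, card_univ, filter_not, card_univ_sdiff, card_filter_eqOn,
    card_fun]

end Counting

section UniversalSet

variable {n b : ℕ}

instance (k : ℕ) (T : Finset (Fin n → Fin b)) : Decidable (IsUniversal k T) := by
  unfold IsUniversal; infer_instance

lemma card_filter_not_isUniversal_le [NeZero b] (k m : ℕ) :
    #{t : Fin m → Fin n → Fin b | ¬ IsUniversal k (univ.image t)} ≤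
      n.choose k * b ^ k * (b ^ n - b ^ (n - k)) ^ m := by
  -- a configuration on `S` is represented by its extension by `0` outside `S`
  let configs (S : Finset (Fin n)) : Finset (Fin n → Fin b) :=
    piFinset fun i => if i ∈ S then univ else {0}
  have hsub : ({t : Fin m → Fin n → Fin b | ¬ IsUniversal k (univ.image t)} : Finset _) ⊆
      (powersetCard k univ).biUnion fun S => (configs S).biUnion fun f =>
        {t | ∀ j, ¬ ∀ i ∈ S, t j i = f i} := by
    intro t ht
    have hnot := (mem_filter_univ _).1 ht
    simp only [IsUniversal] at hnot
    push Not at hnot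
    obtain ⟨S, hS, f, hf⟩ := hnot
    simp only [mem_biUnion, mem_powersetCard_univ, mem_filter_univ]
    refine ⟨S, hS, S.piecewise f 0, ?_, fun j hj => ?_⟩
    · simp only [configs, mem_piFinset]
      intro i
      by_cases hi : i ∈ S <;> simp [hi]
    · obtain ⟨i, hi, hne⟩ := hf (t j) (mem_image_of_mem _ (mem_univ j))
      exact hne (by simpa [hi] using hj i hi)
  calc _ ≤ _ := card_le_card hsub
    _ ≤ ∑ S ∈ powersetCard k univ, ∑ f ∈ configs S,
          #{t : Fin m → Fin n → Fin b | ∀ j, ¬ ∀ i ∈ S, t j i = f i} :=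
        card_biUnion_le.trans (sum_le_sum fun _ _ => card_biUnion_le)
    _ = ∑ S ∈ powersetCard k univ, b ^ k * (b ^ n - b ^ (n - k)) ^ m := by
        refine Finset.sum_congr rfl fun S hS => ?_
        have hconfigs : #(configs S) = b ^ #S := by
          simp only [configs]
          rw [card_piFinset_ite]
          simp
        simp only [card_filter_forall_not_eqOn, sum_const, hconfigs, Fintype.card_fin,
          (mem_powersetCard_univ.1 hS), smul_eq_mul]
    _ = n.choose k * b ^ k * (b ^ n - b ^ (n - k)) ^ m := by simp [mul_assoc]

lemma exists_isUniversal_card_le [NeZero b] {k m : ℕ}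
    (h : n.choose k * b ^ k * (b ^ n - b ^ (n - k)) ^ m < b ^ (n * m)) :
    ∃ T : Finset (Fin n → Fin b), IsUniversal k T ∧ #T ≤ m := by
  obtain ⟨t, ht⟩ : ∃ t : Fin m → Fin n → Fin b, IsUniversal k (univ.image t) := by
    by_contra! hbad
    have hall : ({t : Fin m → Fin n → Fin b | ¬ IsUniversal k (univ.image t)} : Finset _) = univ :=
      filter_true_of_mem fun t _ => hbad t
    have := (card_filter_not_isUniversal_le k m).trans_lt h
    simp [hall, pow_mul] at this
  exact ⟨_, ht, card_image_le.trans (by simp)⟩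

end UniversalSet

section Estimates

lemma choose_le_exp_one_mul_div_pow (n k : ℕ) : (n.choose k : ℝ) ≤ (exp 1 * n / k) ^ k := by
  have hkk : (k : ℝ) ^ k / k.factorial ≤ exp 1 ^ k := by
    rw [exp_one_pow]; exact pow_div_factorial_le_exp _ k.cast_nonneg k
  have hpos : (0 : ℝ) < (k : ℝ) ^ k := mod_cast Nat.pow_self_pos
  calc (n.choose k : ℝ) ≤ (n : ℝ) ^ k / k.factorial := Nat.choose_le_pow_div k n
    _ ≤ (exp 1 * n / k) ^ k := by
      rw [div_pow, mul_pow, le_div_iff₀ hpos, div_mul_eq_mul_div, div_le_iff₀ (by positivity)]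
      calc (n : ℝ) ^ k * k ^ k = n ^ k * (k ^ k / k.factorial) * k.factorial := by field_simp
        _ ≤ n ^ k * exp 1 ^ k * k.factorial := by gcongr
        _ = _ := by ring

lemma sub_one_pow_mul_lt_pow_of_mul_log_le {B M : ℝ} {m : ℕ} (hB : 1 ≤ B) (hM : 0 < M)
    (hm : m ≠ 0) (h : B * log M ≤ m) : (B - 1) ^ m * M < B ^ m := by
  have hB0 : 0 < B := by linarith
  have hsub : (B - 1) ^ m < B ^ m * exp (-(m / B)) := by
    calc (B - 1) ^ m = B ^ m * (1 - 1 / B) ^ m := by rw [← mul_pow]; field_simp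
      _ < B ^ m * exp (-(1 / B)) ^ m := by
          gcongr
          · exact sub_nonneg.2 (div_le_one_of_le₀ hB hB0.le)
          · exact one_sub_lt_exp_neg (by positivity)
      _ = B ^ m * exp (-(m / B)) := by rw [← exp_nat_mul]; ring_nf
  have hM' : M ≤ exp (m / B) := by
    rw [← exp_log hM, exp_le_exp, le_div_iff₀ hB0]; linarith
  calc (B - 1) ^ m * M < B ^ m * exp (-(m / B)) * M := by gcongr
    _ ≤ B ^ m * exp (-(m / B)) * exp (m / B) := by gcongr
    _ = B ^ m := by rw [mul_assoc, ← exp_add, neg_add_cancel, exp_zero, mul_one]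

lemma choose_mul_pow_le_exp_one_mul_div_pow (n k b : ℕ) :
    (n.choose k : ℝ) * b ^ k ≤ (exp 1 * b * n / k) ^ k := by
  calc (n.choose k : ℝ) * b ^ k ≤ (exp 1 * n / k) ^ k * b ^ k := by
        gcongr; exact choose_le_exp_one_mul_div_pow n k
    _ = (exp 1 * b * n / k) ^ k := by rw [← mul_pow]; ring

lemma one_lt_exp_one_mul_mul_div {n k b : ℕ} (hk : 1 ≤ k) (hkn : k ≤ n) (hb : 1 ≤ b) :
    1 < exp 1 * b * n / k := by
  have hk0 : (0 : ℝ) < k := by exact_mod_cast hk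
  have hkn' : (k : ℝ) ≤ n := by exact_mod_cast hkn
  have hb' : (1 : ℝ) ≤ b := by exact_mod_cast hb
  rw [one_lt_div hk0]
  calc (k : ℝ) ≤ b * n := by nlinarith
    _ < exp 1 * (b * n) := lt_mul_of_one_lt_left (by nlinarith) (one_lt_exp_iff.2 one_pos)
    _ = exp 1 * b * n := by ring

lemma choose_mul_pow_mul_sub_pow_lt {n k b m : ℕ} (hk : 1 ≤ k) (hkn : k ≤ n) (hb : 1 ≤ b)
    (hm : k * (b : ℝ) ^ k * log (exp 1 * b * n / k) ≤ m) :
    n.choose k * b ^ k * (b ^ n - b ^ (n - k)) ^ m < b ^ (n * m) := by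
  have hB : (1 : ℝ) ≤ b ^ k := one_le_pow₀ (by exact_mod_cast hb)
  have hM : (0 : ℝ) < n.choose k * b ^ k :=
    mul_pos (by exact_mod_cast Nat.choose_pos hkn) (by linarith)
  have hm0 : m ≠ 0 := by
    have := log_pos (one_lt_exp_one_mul_mul_div hk hkn hb)
    have : (0 : ℝ) < m := lt_of_lt_of_le (by positivity) hm
    exact_mod_cast this.ne'
  have hlog : (b : ℝ) ^ k * log (n.choose k * b ^ k) ≤ m := by
    calc (b : ℝ) ^ k * log (n.choose k * b ^ k) ≤ b ^ k * (k * log (exp 1 * b * n / k)) := by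
          gcongr
          rw [← log_pow]
          exact log_le_log hM (choose_mul_pow_le_exp_one_mul_div_pow n k b)
      _ = k * b ^ k * log (exp 1 * b * n / k) := by ring
      _ ≤ m := hm
  have key := sub_one_pow_mul_lt_pow_of_mul_log_le hB hM hm0 hlog
  have hfactor : b ^ n - b ^ (n - k) = b ^ (n - k) * (b ^ k - 1) := by
    rw [Nat.mul_sub_one, ← pow_add, Nat.sub_add_cancel hkn]
  have hsplit : b ^ (n * m) = (b ^ (n - k)) ^ m * (b ^ k) ^ m := by
    rw [← mul_pow, ← pow_add, Nat.sub_add_cancel hkn, pow_mul]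
  rw [hfactor, hsplit, mul_pow, mul_comm, mul_assoc]
  refine (Nat.mul_lt_mul_left (by positivity)).2 ?_
  have hbk : 1 ≤ b ^ k := Nat.one_le_pow _ _ hb
  exact_mod_cast (by push_cast [Nat.cast_sub hbk]; exact key :
    (((b ^ k - 1) ^ m * (n.choose k * b ^ k) : ℕ) : ℝ) < ((b ^ k) ^ m : ℕ))

end Estimates

theorem stmt_2 (n k b : ℕ) (hk : 1 ≤ k) (hkn : k ≤ n) (hb : 2 ≤ b) :
    ∃ T : Finset (Fin n → Fin b), IsUniversal k T ∧
      T.card ≤ ⌈(k : ℝ) * (b : ℝ) ^ k *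
        Real.log (Real.exp 1 * (b : ℝ) * (n : ℝ) / (k : ℝ))⌉₊ := by
  have : NeZero b := ⟨by omega⟩
  exact exists_isUniversal_card_le
    (choose_mul_pow_mul_sub_pow_lt hk hkn (by omega) (Nat.le_ceil _))
end

section
/- Let b, k, n, M, N be positive integers and let C = {C_1,...,C_M} with each C_j ⊆ {0,...,b-1}^k nonempty. Let c = min_j #C_j. If N > log(n^k · M) / log(b^k / (b^k - c)) (with c < b^k), then there exists a set T ⊆ {0,...,b-1}^n with #T = N satisfying the k-restriction problem with respect to C. -/
/-!
Choose `N` vectors of `{0, …, b-1}ⁿ` independently and uniformly. For a fixed set `S` of `k`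
coordinates and a fixed `C_j`, all `N` vectors miss `C_j` on `S` with probability at most
`(1 - c / bᵏ)ᴺ`. The hypothesis on `N` makes `nᵏ · M · (1 - c / bᵏ)ᴺ < 1`, and
`n.choose k ≤ nᵏ`, so by the union bound some choice of the `N` vectors meets every `C_j` on
every `S`. Probabilities are replaced by counts of `N`-tuples of vectors throughout.
-/

/-- The restriction of `x` to the index set `S` (of cardinality `k`), read as a vector of
length `k` via the increasing enumeration of `S`. -/
def restrict {α : Type*} {n k : ℕ} (x : Fin n → α) (S : Finset (Fin n)) (h : S.card = k) :
    Fin k → α :=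
  fun i => x (S.orderIsoOfFin h i).1

open Finset Fintype

section

variable {α : Type*} {n k : ℕ}

def restrictEquiv (S : Finset (Fin n)) (hS : #S = k) :
    (Fin n → α) ≃ (Fin k → α) × ({i // i ∉ S} → α) :=
  (Equiv.piEquivPiSubtypeProd (· ∈ S) fun _ => α).trans
    (((S.orderIsoOfFin hS).toEquiv.arrowCongr (Equiv.refl α)).symm.prodCongr (Equiv.refl _))

theorem restrictEquiv_apply_fst (S : Finset (Fin n)) (hS : #S = k) (x : Fin n → α) :
    (restrictEquiv S hS x).1 = restrict x S hS :=
  rfl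

variable [Fintype α] [DecidableEq α]

theorem card_filter_restrict_mem (S : Finset (Fin n)) (hS : #S = k) (A : Finset (Fin k → α)) :
    #{x : Fin n → α | restrict x S hS ∈ A} = #A * card α ^ (n - k) := by
  rw [card_equiv (restrictEquiv S hS) (t := A ×ˢ univ) (by simp [restrictEquiv_apply_fst]),
    card_product, card_univ, card_fun, card_subtype_compl, card_coe, hS, Fintype.card_fin]

theorem card_filter_restrict_notMem (S : Finset (Fin n)) (hS : #S = k)
    (A : Finset (Fin k → α)) :
    #{x : Fin n → α | restrict x S hS ∉ A} = (card α ^ k - #A) * card α ^ (n - k) := by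
  have hcard : card α ^ k = card (Fin k → α) := by simp
  rw [hcard, ← card_compl, ← card_filter_restrict_mem S hS]
  simp only [mem_compl]

end

theorem exists_forall_restrict_mem {α ι : Type*} [Fintype α] [Nonempty α] [DecidableEq α]
    [Fintype ι] {n k N c : ℕ} (hkn : k ≤ n) (C : ι → Finset (Fin k → α))
    (hc : ∀ j, c ≤ #(C j))
    (h : n.choose k * card ι * (card α ^ k - c) ^ N < (card α ^ k) ^ N) :
    ∃ ω : Fin N → Fin n → α, ∀ S : Finset (Fin n), ∀ hS : #S = k, ∀ j,
      ∃ i, restrict (ω i) S hS ∈ C j := by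
  by_contra! hbad
  set q := card α
  let avoid (p : {S : Finset (Fin n) // #S = k} × ι) : Finset (Fin N → Fin n → α) :=
    piFinset fun _ => {x | restrict x p.1.1 p.1.2 ∉ C p.2}
  have hcover : (univ : Finset (Fin N → Fin n → α)) ⊆ univ.biUnion avoid := by
    intro ω _
    obtain ⟨S, hS, j, hj⟩ := hbad ω
    simpa [avoid] using ⟨S, hS, j, hj⟩
  have havoid (p) : #(avoid p) ≤ ((q ^ k - c) * q ^ (n - k)) ^ N := by
    rw [card_piFinset, prod_const, card_univ, Fintype.card_fin, card_filter_restrict_notMem]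
    gcongr
    exact hc p.2
  have hcount : (q ^ n) ^ N ≤ n.choose k * card ι * ((q ^ k - c) * q ^ (n - k)) ^ N := by
    simpa only [card_univ, card_prod, card_finset_len, card_fun, Fintype.card_fin] using
      (card_le_card hcover).trans (card_biUnion_le_card_mul _ _ _ fun p _ => havoid p)
  have hq : q ^ n = q ^ k * q ^ (n - k) := by rw [← pow_add, Nat.add_sub_cancel' hkn]
  rw [hq, mul_pow, mul_pow, ← mul_assoc] at hcount
  exact (Nat.mul_lt_mul_of_pos_right h (pow_pos (pow_pos card_pos _) _)).not_ge hcount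

theorem mul_pow_lt_pow_of_log_div_log_lt {X a B : ℝ} {N : ℕ} (hX : 0 < X) (ha : 0 < a)
    (haB : a < B) (h : Real.log X / Real.log (B / a) < N) : X * a ^ N < B ^ N := by
  have hB : 0 < B := ha.trans haB
  have hlog : 0 < Real.log (B / a) := Real.log_pos ((one_lt_div ha).2 haB)
  have hX_lt : X < (B / a) ^ N :=
    (Real.lt_pow_iff_log_lt hX (by positivity)).2 ((div_lt_iff₀ hlog).1 h)
  rwa [div_pow, lt_div_iff₀ (by positivity)] at hX_lt

theorem choose_mul_mul_pow_lt_of_log_div_log_lt {n k M N c q : ℕ} (hn : 0 < n) (hM : 0 < M)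
    (hc : 0 < c) (hcq : c < q)
    (h : Real.log ((n : ℝ) ^ k * M) / Real.log ((q : ℝ) / (q - c)) < N) :
    n.choose k * M * (q - c) ^ N < q ^ N := by
  have hc' : (0 : ℝ) < c := by exact_mod_cast hc
  have hcq' : (c : ℝ) < q := by exact_mod_cast hcq
  have hreal := mul_pow_lt_pow_of_log_div_log_lt (by positivity) (by linarith) (by linarith) h
  have hchoose : (n.choose k : ℝ) ≤ (n : ℝ) ^ k := by exact_mod_cast Nat.choose_le_pow n k
  have : (n.choose k : ℝ) * M * ((q - c : ℕ) : ℝ) ^ N < (q : ℝ) ^ N := by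
    rw [Nat.cast_sub hcq.le]
    calc (n.choose k : ℝ) * M * ((q : ℝ) - c) ^ N
        ≤ (n : ℝ) ^ k * M * ((q : ℝ) - c) ^ N := by gcongr
      _ < (q : ℝ) ^ N := hreal
  exact_mod_cast this

theorem stmt_3_general (b k n M N : ℕ) (hb : 1 ≤ b) (hk : 1 ≤ k) (hkn : k ≤ n) (hM : 1 ≤ M)
    (C : Fin M → Finset (Fin k → Fin b)) (hCne : ∀ j, (C j).Nonempty)
    (c : ℕ) (hc₁ : ∀ j, c ≤ (C j).card) (hc₂ : ∃ j, (C j).card = c) (hcb : c < b ^ k)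
    (hNlarge : (N : ℝ) >
      Real.log ((n : ℝ) ^ k * (M : ℝ)) /
        Real.log ((b : ℝ) ^ k / ((b : ℝ) ^ k - (c : ℝ)))) :
    ∃ T : Finset (Fin n → Fin b), T.card ≤ N ∧
      ∀ S : Finset (Fin n), ∀ hS : S.card = k, ∀ j : Fin M,
        ∃ x ∈ T, restrict x S hS ∈ C j := by
  have hc : 0 < c := hc₂.elim fun j hj => hj ▸ (hCne j).card_pos
  have hunion : n.choose k * M * (b ^ k - c) ^ N < (b ^ k) ^ N :=
    choose_mul_mul_pow_lt_of_log_div_log_lt (hk.trans hkn) hM hc hcb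
      (by push_cast; exact hNlarge)
  have : Nonempty (Fin b) := ⟨⟨0, hb⟩⟩
  obtain ⟨ω, hω⟩ := exists_forall_restrict_mem hkn C hc₁ (by simpa using hunion)
  refine ⟨univ.image ω, card_image_le.trans (by simp), fun S hS j => ?_⟩
  obtain ⟨i, hi⟩ := hω S hS j
  exact ⟨ω i, mem_image_of_mem ω (mem_univ i), hi⟩

theorem stmt_3 (b k n M N : ℕ) (hb : 1 ≤ b) (hk : 1 ≤ k) (hkn : k ≤ n) (hM : 1 ≤ M)
    (hN : 1 ≤ N) (C : Fin M → Finset (Fin k → Fin b)) (hCne : ∀ j, (C j).Nonempty)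
    (c : ℕ) (hc₁ : ∀ j, c ≤ (C j).card) (hc₂ : ∃ j, (C j).card = c) (hcb : c < b ^ k)
    (hNlarge : (N : ℝ) >
      Real.log ((n : ℝ) ^ k * (M : ℝ)) /
        Real.log ((b : ℝ) ^ k / ((b : ℝ) ^ k - (c : ℝ)))) :
    ∃ T : Finset (Fin n → Fin b), T.card ≤ N ∧
      ∀ S : Finset (Fin n), ∀ hS : S.card = k, ∀ j : Fin M,
        ∃ x ∈ T, restrict x S hS ∈ C j :=
  stmt_3_general b k n M N hb hk hkn hM C hCne c hc₁ hc₂ hcb hNlarge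
end

section
/- Let n, k, L be positive integers and let c_1,...,c_n ∈ {1,...,k^2}^L be codewords of a code with pairwise normalized Hamming distance at least 1 - 2/k^2 (i.e., any two distinct codewords agree on at most 2L/k^2 coordinates). Then the family H = {h_j : j = 1,...,L}, where h_j(i) = c_i(j), is an (n,k,k^2)-splitter; in particular, for every S ⊆ {1,...,n} with #S = k there is a coordinate j such that the codewords {c_i : i ∈ S} are pairwise distinct in coordinate j. -/
/-!
If no coordinate `j` is injective on `S`, every coordinate contributes at least one colliding
unordered pair, i.e. at least two ordered pairs of `S.offDiag`. Counting the pairs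
(ordered pair, agreeing coordinate) both ways gives `2L ≤ ∑ₚ agree(p)`, while the distance
bound gives `∑ₚ agree(p) · k² ≤ (k² - k) · 2L < k² · 2L`.
-/

open Finset

namespace Splitter

variable {α J β : Type*} [DecidableEq α] [DecidableEq β]

theorem two_le_card_offDiag_filter_of_not_injOn {S : Finset α} {f : α → β}
    (h : ¬ Set.InjOn f S) : 2 ≤ #(S.offDiag.filter fun p => f p.1 = f p.2) := by
  obtain ⟨i, hi, i', hi', heq, hne⟩ : ∃ i ∈ S, ∃ i' ∈ S, f i = f i' ∧ i ≠ i' := by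
    simpa [Set.InjOn] using h
  have hpair : #({(i, i'), (i', i)} : Finset (α × α)) = 2 :=
    card_pair (by simp [hne])
  refine hpair ▸ card_le_card ?_
  intro p hp
  rcases mem_insert.1 hp with rfl | hp
  · simp [hi, hi', hne, heq]
  · rw [mem_singleton.1 hp]
    simp [hi, hi', Ne.symm hne, heq]

theorem exists_injOn_of_sum_card_agree_lt [Fintype J] (c : α → J → β) (S : Finset α)
    (h : ∑ p ∈ S.offDiag, #{j | c p.1 j = c p.2 j} < 2 * Fintype.card J) :
    ∃ j, Set.InjOn (fun i => c i j) S := by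
  by_contra! hcollide
  refine h.not_ge ?_
  calc 2 * Fintype.card J = ∑ _j : J, 2 := by simp [mul_comm]
    _ ≤ ∑ j : J, #(S.offDiag.filter fun p => c p.1 j = c p.2 j) :=
      sum_le_sum fun j _ => two_le_card_offDiag_filter_of_not_injOn (hcollide j)
    _ = ∑ p ∈ S.offDiag, #{j | c p.1 j = c p.2 j} :=
      (sum_card_bipartiteAbove_eq_sum_card_bipartiteBelow _).symm

end Splitter

open Splitter in
theorem stmt_6_general (n k L : ℕ) (hk : 1 ≤ k) (hL : 1 ≤ L)
    (c : Fin n → Fin L → Fin (k ^ 2))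
    (hdist : ∀ i i' : Fin n, i ≠ i' →
      (Finset.univ.filter (fun j : Fin L => c i j = c i' j)).card * k ^ 2 ≤ 2 * L) :
    ∀ S : Finset (Fin n), S.card = k →
      ∃ j : Fin L, ∀ i ∈ S, ∀ i' ∈ S, i ≠ i' → c i j ≠ c i' j := by
  intro S hS
  have hsum : (∑ p ∈ S.offDiag, #{j | c p.1 j = c p.2 j}) * k ^ 2 < 2 * L * k ^ 2 :=
    calc (∑ p ∈ S.offDiag, #{j | c p.1 j = c p.2 j}) * k ^ 2
        ≤ ∑ _p ∈ S.offDiag, 2 * L := by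
          rw [sum_mul]
          exact sum_le_sum fun p hp => hdist p.1 p.2 (mem_offDiag.1 hp).2.2
      _ = (k * k - k) * (2 * L) := by rw [sum_const, smul_eq_mul, offDiag_card, hS]
      _ < 2 * L * k ^ 2 := by
          rw [mul_comm, sq]
          exact Nat.mul_lt_mul_of_pos_left (Nat.sub_lt (by positivity) hk) (by omega)
  obtain ⟨j, hj⟩ := exists_injOn_of_sum_card_agree_lt c S
    (by simpa using lt_of_mul_lt_mul_right hsum)
  exact ⟨j, fun i hi i' hi' hne heq => hne (hj hi hi' heq)⟩

/-- Codewords `c 1,…,c n ∈ {1,…,k²}^L` with pairwise normalized Hamming distance at least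
`1 - 2/k²` (distinct codewords agree on at most `2L/k²` coordinates) give rise to an
`(n,k,k²)`-splitter `h_j : i ↦ c i j`: for every `S` of size `k` some coordinate `j`
separates all codewords indexed by `S`, i.e. `i ↦ c i j` is injective on `S`. -/
theorem stmt_6 (n k L : ℕ) (hn : 1 ≤ n) (hk : 1 ≤ k) (hL : 1 ≤ L)
    (c : Fin n → Fin L → Fin (k ^ 2))
    (hdist : ∀ i i' : Fin n, i ≠ i' →
      (Finset.univ.filter (fun j : Fin L => c i j = c i' j)).card * k ^ 2 ≤ 2 * L) :
    ∀ S : Finset (Fin n), S.card = k →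
      ∃ j : Fin L, ∀ i ∈ S, ∀ i' ∈ S, i ≠ i' → c i j ≠ c i' j :=
  stmt_6_general n k L hk hL c hdist
end

section
/- Let m ≥ 2 and d ≥ 1 be integers, and let B = I_1 × ... × I_d ⊆ [0,1]^d be an axis-parallel box with volume greater than 2^{-m}. Then the number of indices j ∈ {1,...,d} such that M_m ⊄ I_j is at most m·2^m, where M_m = {1/2^m, 2/2^m, ..., (2^m - 1)/2^m}. -/
/-
A coordinate interval missing a point of `M_m` misses a point of `[2^{-m}, 1 - 2^{-m}]`,
so its length is at most `1 - 2^{-m}`. If more than `m 2^m` coordinates were of this kind,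
the volume would be at most `(1 - 2^{-m})^{m 2^m} ≤ e^{-m} ≤ 2^{-m}`.
-/

/-- The grid `M_m = {i/2^m : 1 ≤ i ≤ 2^m - 1} ⊆ (0,1)`. -/
def Mgrid (m : ℕ) : Set ℝ := {x | ∃ i : ℕ, 1 ≤ i ∧ i ≤ 2 ^ m - 1 ∧ x = (i : ℝ) / 2 ^ m}

open Finset

theorem Mgrid_subset_Icc (m : ℕ) : Mgrid m ⊆ Set.Icc ((2 : ℝ) ^ m)⁻¹ (1 - ((2 : ℝ) ^ m)⁻¹) := by
  rintro _ ⟨i, hi1, hi2, rfl⟩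
  have hpow : (0 : ℝ) < 2 ^ m := by positivity
  have hi2' : (i : ℝ) ≤ 2 ^ m - 1 := by
    have := (Nat.cast_le (α := ℝ)).mpr hi2
    push_cast [Nat.one_le_two_pow] at this
    exact this
  have hi1' : (1 : ℝ) ≤ i := by exact_mod_cast hi1
  constructor
  · rw [inv_eq_one_div]
    gcongr
  · rw [div_le_iff₀ hpow, sub_mul, inv_mul_cancel₀ hpow.ne', one_mul]
    exact hi2'

theorem sub_le_one_sub_of_notMem_Ioo {a b t x : ℝ} (ha : 0 ≤ a) (hb : b ≤ 1)
    (hx : x ∈ Set.Icc t (1 - t)) (hxab : x ∉ Set.Ioo a b) : b - a ≤ 1 - t := by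
  rw [Set.mem_Ioo, not_and_or, not_lt, not_lt] at hxab
  obtain ⟨htx, hxt⟩ := hx
  rcases hxab with h | h <;> linarith

theorem Finset.prod_le_pow_card_filter {ι R : Type*} [CommSemiring R] [PartialOrder R]
    [IsOrderedRing R] (s : Finset ι) (p : ι → Prop) [DecidablePred p] {f : ι → R} {c : R}
    (h0 : ∀ i ∈ s, 0 ≤ f i) (h1 : ∀ i ∈ s, f i ≤ 1) (hc : ∀ i ∈ s, p i → f i ≤ c) :
    ∏ i ∈ s, f i ≤ c ^ #(s.filter p) := by
  rw [← prod_filter_mul_prod_filter_not s p]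
  have hp : ∏ i ∈ s.filter p, f i ≤ c ^ #(s.filter p) := calc
    ∏ i ∈ s.filter p, f i ≤ ∏ _i ∈ s.filter p, c :=
      prod_le_prod (fun i hi ↦ h0 i (mem_filter.1 hi).1) fun i hi ↦
        hc i (mem_filter.1 hi).1 (mem_filter.1 hi).2
    _ = c ^ #(s.filter p) := prod_const c
  have hnp : ∏ i ∈ s.filter (¬ p ·), f i ≤ 1 :=
    prod_le_one (fun i hi ↦ h0 i (mem_filter.1 hi).1) fun i hi ↦ h1 i (mem_filter.1 hi).1
  exact (mul_le_of_le_one_right (prod_nonneg fun i hi ↦ h0 i (mem_filter.1 hi).1) hnp).trans hp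

theorem one_sub_inv_pow_self_le_inv_two {n : ℕ} (hn : 1 ≤ n) :
    (1 - (n : ℝ)⁻¹) ^ n ≤ 2⁻¹ := by
  have hexp : Real.exp (-1) ≤ 2⁻¹ := by
    rw [Real.exp_neg]
    gcongr
    linarith [Real.add_one_le_exp 1]
  have h := Real.one_sub_div_pow_le_exp_neg (n := n) (t := 1) (by exact_mod_cast hn)
  rw [one_div] at h
  exact h.trans hexp

theorem one_sub_inv_two_pow_pow_le (m : ℕ) :
    (1 - ((2 : ℝ) ^ m)⁻¹) ^ (m * 2 ^ m) ≤ ((2 : ℝ) ^ m)⁻¹ := by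
  have h := one_sub_inv_pow_self_le_inv_two (n := 2 ^ m) Nat.one_le_two_pow
  push_cast at h
  rw [mul_comm, pow_mul]
  have hnonneg : 0 ≤ 1 - ((2 : ℝ) ^ m)⁻¹ :=
    sub_nonneg.2 (inv_le_one_of_one_le₀ (one_le_pow₀ one_le_two))
  exact (pow_le_pow_left₀ (pow_nonneg hnonneg _) h m).trans_eq (inv_pow 2 m)

theorem stmt_7_general (m d : ℕ)
    (a b : Fin d → ℝ) (I : Fin d → Set ℝ)
    (hab : ∀ j, 0 ≤ a j ∧ a j ≤ b j ∧ b j ≤ 1)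
    (hI : ∀ j, Set.Ioo (a j) (b j) ⊆ I j ∧ I j ⊆ Set.Icc (a j) (b j))
    (hvol : ((2 : ℝ) ^ m)⁻¹ < ∏ j, (b j - a j)) :
    Set.ncard {j : Fin d | ¬ Mgrid m ⊆ I j} ≤ m * 2 ^ m := by
  classical
  set t : ℝ := ((2 : ℝ) ^ m)⁻¹
  have ht0 : 0 ≤ t := by positivity
  have ht1 : t ≤ 1 := inv_le_one_of_one_le₀ (one_le_pow₀ one_le_two)
  have hbad : ∀ j, ¬ Mgrid m ⊆ I j → b j - a j ≤ 1 - t := fun j hj ↦ by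
    obtain ⟨x, hxM, hxI⟩ := Set.not_subset.mp hj
    exact sub_le_one_sub_of_notMem_Ioo (hab j).1 (hab j).2.2 (Mgrid_subset_Icc m hxM)
      fun hx ↦ hxI ((hI j).1 hx)
  rw [show {j : Fin d | ¬ Mgrid m ⊆ I j} = ↑(univ.filter fun j ↦ ¬ Mgrid m ⊆ I j) by simp,
    Set.ncard_coe_finset]
  by_contra! hcard
  refine hvol.not_ge ?_
  calc ∏ j, (b j - a j)
      ≤ (1 - t) ^ #(univ.filter fun j ↦ ¬ Mgrid m ⊆ I j) :=
        prod_le_pow_card_filter _ _ (fun j _ ↦ sub_nonneg.2 (hab j).2.1)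
          (fun j _ ↦ by linarith [hab j]) fun j _ ↦ hbad j
    _ ≤ (1 - t) ^ (m * 2 ^ m) := pow_le_pow_of_le_one (by linarith) (by linarith) hcard.le
    _ ≤ t := one_sub_inv_two_pow_pow_le m

/-- If `B = I_1 × ⋯ × I_d ⊆ [0,1]^d` is an axis-parallel box (each `I_j` an interval with
endpoints `a j ≤ b j`) of volume `> 2^{-m}`, then the number of indices `j` with
`M_m ⊄ I_j` is at most `m·2^m`. -/
theorem stmt_7 (m d : ℕ) (hm : 2 ≤ m) (hd : 1 ≤ d)
    (a b : Fin d → ℝ) (I : Fin d → Set ℝ)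
    (hab : ∀ j, 0 ≤ a j ∧ a j ≤ b j ∧ b j ≤ 1)
    (hI : ∀ j, Set.Ioo (a j) (b j) ⊆ I j ∧ I j ⊆ Set.Icc (a j) (b j))
    (hvol : ((2 : ℝ) ^ m)⁻¹ < ∏ j, (b j - a j)) :
    Set.ncard {j : Fin d | ¬ Mgrid m ⊆ I j} ≤ m * 2 ^ m :=
  stmt_7_general m d a b I hab hI hvol
end

section
/- Let m ≥ 2, d ≥ 2, A_m = min(m·2^m, d), and let N be a positive integer with binom(d, A_m) · (2^m - 1)^{A_m} · (1 - (2^m - 1)^{-A_m})^N < 1. Then there exists a set T ⊆ {1,...,2^m - 1}^d of cardinality at most N satisfying condition (S) of order m. -/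
/-!
Count all `N`-tuples of points of `{1,…,q}^d`, `q = 2^m - 1`. For a fixed set `A` of `t`
coordinates and a fixed pattern `z` on `A`, a point misses `z` for a proportion `1 - q^{-t}` of
the choices, so all `N` points miss it for a proportion `(1 - q^{-t})^N` of the tuples. A union
bound over the `binom(d, t) · q^t` pairs `(A, z)` shows that, under the hypothesis, some tuple
misses no pattern; its set of points is `T`.
-/

open Finset
open Fintype (card)

variable {κ ι α : Type*} [Fintype κ] [Fintype ι] [Fintype α]

/-- Condition (S), with `A_m = t`, for the points `f j`. -/
def IsCoveringArray (f : κ → ι → α) (t : ℕ) : Prop :=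
  ∀ A : Finset ι, #A = t → Function.Surjective fun j ↦ A.restrict (f j)

omit [Fintype ι] [Fintype α] in
lemma card_filter_forall_apply [DecidableEq κ] {β : Type*} [Fintype β] (P : β → Prop)
    [DecidablePred P] :
    #{f : κ → β | ∀ j, P (f j)} = #{b | P b} ^ card κ := by
  simp only [← Fintype.card_subtype]
  rw [Fintype.card_congr (Equiv.subtypePiEquivPi (p := fun _ ↦ P)), Fintype.card_fun]

omit [Fintype κ] in
lemma card_filter_restrict_ne [DecidableEq ι] [DecidableEq α] (A : Finset ι) (z : A → α) :
    #{g : ι → α | A.restrict g ≠ z} = (card α ^ #A - 1) * card α ^ (card ι - #A) := by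
  let e : {g : ι → α // A.restrict g ≠ z} ≃ {u : A → α // u ≠ z} × ({i // i ∉ A} → α) :=
    ((Equiv.piEquivPiSubtypeProd (· ∈ A) fun _ ↦ α).subtypeEquiv fun _ ↦ Iff.rfl).trans
      (Equiv.prodSubtypeFstEquivSubtypeProd (p := (· ≠ z)))
  rw [← Fintype.card_subtype, Fintype.card_congr e, Fintype.card_prod]
  simp

theorem exists_isCoveringArray_of_card_lt (t : ℕ)
    (h : (card ι).choose t * (card α ^ t * ((card α ^ t - 1) * card α ^ (card ι - t)) ^ card κ)
      < card α ^ (card ι * card κ)) :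
    ∃ f : κ → ι → α, IsCoveringArray f t := by
  classical
  let missing : Finset (κ → ι → α) := (powersetCard t univ).biUnion fun A ↦
    univ.biUnion fun z : A → α ↦ {f | ∀ j, A.restrict (f j) ≠ z}
  have hcard : #missing < #(univ : Finset (κ → ι → α)) := calc
    #missing ≤ ∑ A ∈ powersetCard t univ, ∑ z : A → α,
        #{f : κ → ι → α | ∀ j, A.restrict (f j) ≠ z} :=
      card_biUnion_le.trans (sum_le_sum fun _ _ ↦ card_biUnion_le)
    _ = ∑ A ∈ powersetCard t univ,
        card α ^ t * ((card α ^ t - 1) * card α ^ (card ι - t)) ^ card κ := by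
      refine sum_congr rfl fun A hA ↦ ?_
      rw [sum_congr rfl fun z _ ↦ card_filter_forall_apply fun g : ι → α ↦ A.restrict g ≠ z]
      simp [card_filter_restrict_ne, mem_powersetCard_univ.1 hA]
    _ < #(univ : Finset (κ → ι → α)) := by simpa [pow_mul] using h
  obtain ⟨f, -, hf⟩ := exists_mem_notMem_of_card_lt_card hcard
  refine ⟨f, fun A hA z ↦ ?_⟩
  by_contra hz
  exact hf (mem_biUnion.2 ⟨A, mem_powersetCard_univ.2 hA, mem_biUnion.2 ⟨z, mem_univ _, by
    simpa using hz⟩⟩)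

theorem exists_isCoveringArray_of_choose_mul_lt_one [Nonempty α] {t : ℕ} (ht : t ≤ card ι)
    (h : ((card ι).choose t : ℝ) * (card α : ℝ) ^ t * (1 - ((card α : ℝ) ^ t)⁻¹) ^ card κ < 1) :
    ∃ f : κ → ι → α, IsCoveringArray f t := by
  apply exists_isCoveringArray_of_card_lt
  have hmiss : (((card α ^ t - 1) * card α ^ (card ι - t) : ℕ) : ℝ)
      = (card α : ℝ) ^ card ι * (1 - ((card α : ℝ) ^ t)⁻¹) := by
    rw [Nat.cast_mul, Nat.cast_sub (Nat.one_le_pow _ _ Fintype.card_pos), ← pow_sub_mul_pow _ ht]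
    push_cast
    field_simp
  rw [← Nat.cast_lt (α := ℝ)]
  calc _ = ((card ι).choose t : ℝ) * (card α : ℝ) ^ t * (1 - ((card α : ℝ) ^ t)⁻¹) ^ card κ
        * (card α : ℝ) ^ (card ι * card κ) := by
        rw [Nat.cast_mul, Nat.cast_mul, Nat.cast_pow, Nat.cast_pow, hmiss, mul_pow, pow_mul]
        ring
    _ < (card α ^ (card ι * card κ) : ℕ) := by
      push_cast
      exact mul_lt_of_lt_one_left (by positivity) h

theorem stmt_12_general (m d N : ℕ) (hm : 2 ≤ m)
    (hsmall : (d.choose (min (m * 2 ^ m) d) : ℝ) *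
        ((2 : ℝ) ^ m - 1) ^ (min (m * 2 ^ m) d) *
        (1 - (((2 : ℝ) ^ m - 1) ^ (min (m * 2 ^ m) d))⁻¹) ^ N < 1) :
    ∃ T : Finset (Fin d → ℕ),
      (∀ x ∈ T, ∀ i, 1 ≤ x i ∧ x i ≤ 2 ^ m - 1) ∧ T.card ≤ N ∧
      ∀ A : Finset (Fin d), A.card = min (m * 2 ^ m) d →
        ∀ z : Fin d → ℕ, (∀ i, 1 ≤ z i ∧ z i ≤ 2 ^ m - 1) →
          ∃ x ∈ T, ∀ i ∈ A, x i = z i := by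
  have hq : 1 ≤ 2 ^ m - 1 := Nat.le_sub_one_of_lt (Nat.one_lt_two_pow (by omega))
  have : NeZero (2 ^ m - 1) := ⟨by omega⟩
  have hcast : (((2 ^ m - 1 : ℕ) : ℝ)) = (2 : ℝ) ^ m - 1 := by
    rw [Nat.cast_sub Nat.one_le_two_pow]; norm_num
  obtain ⟨f, hf⟩ := exists_isCoveringArray_of_choose_mul_lt_one (κ := Fin N) (ι := Fin d)
    (α := Fin (2 ^ m - 1)) (t := min (m * 2 ^ m) d) (by simp) (by simpa [hcast] using hsmall)
  refine ⟨univ.image fun j i ↦ (f j i : ℕ) + 1, ?_, card_image_le.trans_eq (card_fin N), ?_⟩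
  · simp only [mem_image, mem_univ, true_and, forall_exists_index, forall_apply_eq_imp_iff]
    exact fun j i ↦ ⟨by omega, (f j i).isLt⟩
  · intro A hA z hz
    obtain ⟨j, hj⟩ := hf A hA fun i ↦ ⟨z i - 1, by have := hz i; omega⟩
    refine ⟨_, mem_image_of_mem _ (mem_univ j), fun i hi ↦ ?_⟩
    have hji : (f j i : ℕ) = z i - 1 := congrArg Fin.val (congrFun hj ⟨i, hi⟩)
    have := hz i
    omega

/-- If `binom(d, A_m)·(2^m-1)^{A_m}·(1-(2^m-1)^{-A_m})^N < 1` with `A_m = min(m·2^m, d)`,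
then there is a set `T ⊆ {1,…,2^m-1}^d` of cardinality at most `N` satisfying condition
(S) of order `m`. -/
theorem stmt_12 (m d N : ℕ) (hm : 2 ≤ m) (hd : 2 ≤ d) (hN : 1 ≤ N)
    (hsmall : (d.choose (min (m * 2 ^ m) d) : ℝ) *
        ((2 : ℝ) ^ m - 1) ^ (min (m * 2 ^ m) d) *
        (1 - (((2 : ℝ) ^ m - 1) ^ (min (m * 2 ^ m) d))⁻¹) ^ N < 1) :
    ∃ T : Finset (Fin d → ℕ),
      (∀ x ∈ T, ∀ i, 1 ≤ x i ∧ x i ≤ 2 ^ m - 1) ∧ T.card ≤ N ∧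
      ∀ A : Finset (Fin d), A.card = min (m * 2 ^ m) d →
        ∀ z : Fin d → ℕ, (∀ i, 1 ≤ z i ∧ z i ≤ 2 ^ m - 1) →
          ∃ x ∈ T, ∀ i ∈ A, x i = z i :=
  stmt_12_general m d N hm hsmall
end

section
/- Let m ∈ ℕ, s ∈ {0,1,...,2^m - 1}^d and p ∈ {1/2^m,...,1 - 1/2^m}^d with Ω_m(s,p) nonempty. If z is uniformly distributed in M_m^d, then P(z ∈ B_m(s,p)) ≥ 2^{-(m+4)}, where B_m(s,p) = ∏_{ℓ=1}^d [p_ℓ, p_ℓ + (s_ℓ - 1)/2^m]. -/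
/-- `Ω_m(s,p)` is nonempty. -/
def OmegaNonempty (m d : ℕ) (s : Fin d → ℕ) (p : Fin d → ℝ) : Prop :=
  ∃ a b : Fin d → ℝ,
    (∀ ℓ, 0 ≤ a ℓ ∧ a ℓ ≤ b ℓ ∧ b ℓ ≤ 1) ∧
    ((2 : ℝ) ^ m)⁻¹ < ∏ ℓ, (b ℓ - a ℓ) ∧
    ∀ ℓ, (s ℓ : ℝ) / 2 ^ m < b ℓ - a ℓ ∧ b ℓ - a ℓ ≤ ((s ℓ : ℝ) + 1) / 2 ^ m ∧
      p ℓ - ((2 : ℝ) ^ m)⁻¹ ≤ a ℓ ∧ a ℓ < p ℓ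

/-! Writing `p ℓ = i ℓ / 2 ^ m`, the box condition on `z` decouples into
`z ℓ ∈ [i ℓ, i ℓ + s ℓ)`, and a box of `Ω_m(s,p)` fits in `[0,1]`, so `i ℓ + s ℓ ≤ 2 ^ m`:
exactly `∏ ℓ, s ℓ` grid points lie in `B_m(s,p)`. With `N = 2 ^ m`, the volume of a box of
`Ω_m(s,p)` forces `s ℓ ≥ 1` and `N ^ d < N ∏ (s ℓ + 1)`, i.e. `u ℓ = N / (s ℓ + 1) ≥ 1` satisfy
`∏ u ℓ < N`, hence `∑ (u ℓ - 1) ≤ N`. Coordinatewise `(1 - 1/N) (1 + 1/s ℓ) ≤ 1 + 2 (u ℓ - 1) / N`,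
so `∏ (1 - 1/N) (1 + 1/s ℓ) ≤ e ^ 2 < 16`, which rearranges to `(N - 1) ^ d ≤ 16 N ∏ s ℓ`. -/

open Finset

theorem Finset.one_add_sum_le_prod_one_add {ι R : Type*} [CommSemiring R] [PartialOrder R]
    [IsOrderedRing R] (s : Finset ι) {f : ι → R} (hf : ∀ i ∈ s, 0 ≤ f i) :
    1 + ∑ i ∈ s, f i ≤ ∏ i ∈ s, (1 + f i) := by
  induction s using Finset.cons_induction with
  | empty => simp
  | cons a s _ ih =>
    have hfa : 0 ≤ f a := hf a (mem_cons_self a s)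
    have hfs : ∀ i ∈ s, 0 ≤ f i := fun i hi ↦ hf i (mem_cons_of_mem hi)
    rw [sum_cons, prod_cons]
    calc 1 + (f a + ∑ i ∈ s, f i) ≤ 1 + (f a + ∑ i ∈ s, f i) + f a * ∑ i ∈ s, f i :=
          le_add_of_nonneg_right (mul_nonneg hfa (sum_nonneg hfs))
      _ = (1 + f a) * (1 + ∑ i ∈ s, f i) := by ring
      _ ≤ (1 + f a) * ∏ i ∈ s, (1 + f i) :=
          mul_le_mul_of_nonneg_left (ih hfs) (add_nonneg zero_le_one hfa)

theorem Real.exp_two_lt_sixteen : Real.exp 2 < 16 := by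
  have h : Real.exp 2 = Real.exp 1 ^ 2 := by rw [← Real.exp_nat_mul]; norm_num
  rw [h]
  nlinarith [Real.exp_one_lt_d9, Real.exp_pos 1]

theorem Fin.card_filter_val_mem_Ico {n a b : ℕ} (hb : b ≤ n) :
    #{z : Fin n | (z : ℕ) ∈ Ico a b} = b - a := by
  rw [← Nat.card_Ico, ← card_map Fin.valEmbedding]
  congr 1
  ext k
  simp only [mem_map, mem_filter, mem_univ, true_and, Fin.valEmbedding_apply]
  constructor
  · rintro ⟨z, hz, rfl⟩
    exact hz
  · intro hk
    exact ⟨⟨k, (mem_Ico.1 hk).2.trans_le hb⟩, hk, rfl⟩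

theorem natCast_div_mem_Icc_iff {N : ℝ} (hN : 0 < N) (i z s : ℕ) :
    (i / N ≤ z / N ∧ z / N ≤ i / N + (s - 1) / N) ↔ z ∈ Ico i (i + s) := by
  rw [← add_div, div_le_div_iff_of_pos_right hN, div_le_div_iff_of_pos_right hN, mem_Ico,
    Nat.lt_iff_add_one_le, ← Nat.cast_le (α := ℝ), ← Nat.cast_le (α := ℝ)]
  push_cast
  constructor <;> rintro ⟨h1, h2⟩ <;> exact ⟨h1, by linarith⟩

theorem sub_one_mul_add_one_le {N s : ℝ} (hN : 0 < N) (hs : 1 ≤ s) (hsN : s + 1 ≤ N) :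
    (N - 1) * (s + 1) ≤ (1 + 2 * (N / (s + 1) - 1) / N) * (N * s) := by
  have hs0 : 0 < s + 1 := by linarith
  rw [← mul_le_mul_iff_of_pos_right hs0]
  calc (N - 1) * (s + 1) * (s + 1) ≤ N * s * (s + 1) + 2 * s * (N - (s + 1)) := by
        nlinarith [mul_nonneg (sub_nonneg.2 hs) (sub_nonneg.2 hsN)]
    _ = (1 + 2 * (N / (s + 1) - 1) / N) * (N * s) * (s + 1) := by field_simp

theorem pow_sub_one_le_sixteen_mul_prod {ι : Type*} [Fintype ι] {N : ℝ} (hN : 1 ≤ N)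
    {s : ι → ℝ} (hs : ∀ i, 1 ≤ s i) (hsN : ∀ i, s i + 1 ≤ N)
    (hprod : N ^ Fintype.card ι < N * ∏ i, (s i + 1)) :
    (N - 1) ^ Fintype.card ι ≤ 16 * N * ∏ i, s i := by
  have hN0 : 0 < N := by linarith
  have hs0 : ∀ i, 0 < s i + 1 := fun i ↦ by linarith [hs i]
  set x : ι → ℝ := fun i ↦ N / (s i + 1) - 1 with hx
  have hx0 : ∀ i, 0 ≤ x i := fun i ↦ sub_nonneg.2 ((one_le_div (hs0 i)).2 (hsN i))
  have hprodx : (∏ i, (1 + x i)) * ∏ i, (s i + 1) = N ^ Fintype.card ι := by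
    rw [← prod_mul_distrib, ← card_univ, ← prod_const]
    exact prod_congr rfl fun i _ ↦ by simp only [hx]; field_simp [(hs0 i).ne']; ring
  have hP : 0 < ∏ i, (s i + 1) := prod_pos fun i _ ↦ hs0 i
  have hsumx : ∑ i, x i ≤ N := by
    have hlt : ∏ i, (1 + x i) < N :=
      lt_of_mul_lt_mul_right (hprodx ▸ hprod) hP.le
    linarith [one_add_sum_le_prod_one_add univ fun i _ ↦ hx0 i]
  have hexp : ∏ i, (1 + 2 * x i / N) ≤ 16 := calc
    ∏ i, (1 + 2 * x i / N) ≤ Real.exp (∑ i, 2 * x i / N) :=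
      Real.prod_one_add_le_exp_sum univ fun i ↦ by have := hx0 i; positivity
    _ ≤ Real.exp 2 := by
      rw [Real.exp_le_exp, ← sum_div, ← mul_sum, div_le_iff₀ hN0]
      linarith
    _ ≤ 16 := Real.exp_two_lt_sixteen.le
  have hcoord : ∏ i, ((N - 1) * (s i + 1)) ≤ ∏ i, ((1 + 2 * x i / N) * (N * s i)) :=
    prod_le_prod (fun i _ ↦ mul_nonneg (by linarith) (hs0 i).le)
      fun i _ ↦ sub_one_mul_add_one_le hN0 (hs i) (hsN i)
  rw [prod_mul_distrib, prod_mul_distrib, prod_mul_distrib, prod_const, prod_const,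
    card_univ] at hcoord
  have hS : 0 ≤ ∏ i, s i := prod_nonneg fun i _ ↦ by linarith [hs i]
  refine le_of_mul_le_mul_right ?_ hP
  calc (N - 1) ^ Fintype.card ι * ∏ i, (s i + 1)
      ≤ (∏ i, (1 + 2 * x i / N)) * (N ^ Fintype.card ι * ∏ i, s i) := hcoord
    _ ≤ 16 * ((N * ∏ i, (s i + 1)) * ∏ i, s i) :=
      mul_le_mul hexp (mul_le_mul_of_nonneg_right hprod.le hS) (by positivity) (by norm_num)
    _ = 16 * N * (∏ i, s i) * ∏ i, (s i + 1) := by ring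

namespace OmegaNonempty

variable {m d : ℕ} {s : Fin d → ℕ} {p : Fin d → ℝ}

theorem one_le (h : OmegaNonempty m d s p) (ℓ : Fin d) : 1 ≤ s ℓ := by
  obtain ⟨a, b, hab, hvol, hside⟩ := h
  by_contra! hs
  have hlen : b ℓ - a ℓ ≤ ((2 : ℝ) ^ m)⁻¹ := by
    simpa [Nat.lt_one_iff.1 hs] using (hside ℓ).2.1
  have hrest : ∏ k ∈ univ.erase ℓ, (b k - a k) ≤ 1 :=
    prod_le_one (fun k _ ↦ by linarith [(hab k).2.1]) fun k _ ↦ by linarith [(hab k).1, (hab k).2.2]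
  have : ∏ k, (b k - a k) ≤ ((2 : ℝ) ^ m)⁻¹ := by
    rw [← mul_prod_erase univ _ (mem_univ ℓ)]
    exact (mul_le_of_le_one_right (by linarith [(hab ℓ).2.1]) hrest).trans hlen
  linarith

theorem pow_lt_mul_prod (h : OmegaNonempty m d s p) :
    ((2 : ℝ) ^ m) ^ d < 2 ^ m * ∏ ℓ, ((s ℓ : ℝ) + 1) := by
  obtain ⟨a, b, hab, hvol, hside⟩ := h
  have hle : ∏ ℓ, (b ℓ - a ℓ) ≤ ∏ ℓ, (((s ℓ : ℝ) + 1) / 2 ^ m) :=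
    prod_le_prod (fun ℓ _ ↦ by linarith [(hab ℓ).2.1]) fun ℓ _ ↦ (hside ℓ).2.1
  have := hvol.trans_le hle
  rwa [prod_div_distrib, prod_const, card_univ, Fintype.card_fin,
    inv_lt_iff_one_lt_mul₀ (by positivity), div_mul_eq_mul_div, one_lt_div (by positivity),
    mul_comm] at this

theorem add_le_two_pow (h : OmegaNonempty m d s p) {ℓ : Fin d} {i : ℕ}
    (hi : p ℓ = i / 2 ^ m) : i + s ℓ ≤ 2 ^ m := by
  obtain ⟨a, b, hab, -, hside⟩ := h
  obtain ⟨hlo, -, hpa, -⟩ := hside ℓ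
  have hN : (0 : ℝ) < 2 ^ m := by positivity
  have : (i : ℝ) + s ℓ < 2 ^ m + 1 := by
    rw [hi] at hpa
    rw [← div_lt_div_iff_of_pos_right hN, add_div, add_div, div_self hN.ne', one_div]
    linarith [(hab ℓ).2.2]
  exact Nat.lt_succ_iff.1 (by exact_mod_cast this)

end OmegaNonempty

theorem card_filter_grid_box {m d : ℕ} {s i : Fin d → ℕ} {p : Fin d → ℝ}
    (hp : ∀ ℓ, p ℓ = i ℓ / 2 ^ m) (hi : ∀ ℓ, 1 ≤ i ℓ) (his : ∀ ℓ, i ℓ + s ℓ ≤ 2 ^ m) :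
    (@Finset.filter (Fin d → Fin (2 ^ m))
      (fun z => (∀ ℓ, 1 ≤ (z ℓ : ℕ)) ∧
        ∀ ℓ, p ℓ ≤ ((z ℓ : ℕ) : ℝ) / 2 ^ m ∧
          ((z ℓ : ℕ) : ℝ) / 2 ^ m ≤ p ℓ + ((s ℓ : ℝ) - 1) / 2 ^ m)
      (Classical.decPred _) Finset.univ).card = ∏ ℓ, s ℓ := by
  calc _ = #(Fintype.piFinset fun ℓ ↦ {z : Fin (2 ^ m) | (z : ℕ) ∈ Ico (i ℓ) (i ℓ + s ℓ)}) := by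
        congr 1
        ext z
        simp only [mem_filter, mem_univ, true_and, Fintype.mem_piFinset, hp,
          natCast_div_mem_Icc_iff (by positivity : (0 : ℝ) < 2 ^ m)]
        exact ⟨fun h ↦ h.2, fun h ↦ ⟨fun ℓ ↦ (hi ℓ).trans (mem_Ico.1 (h ℓ)).1, h⟩⟩
    _ = ∏ ℓ, s ℓ := by
        rw [Fintype.card_piFinset]
        exact prod_congr rfl fun ℓ _ ↦ by
          rw [Fin.card_filter_val_mem_Ico (his ℓ), Nat.add_sub_cancel_left]

theorem stmt_15_general (m d : ℕ)
    (s : Fin d → ℕ)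
    (p : Fin d → ℝ) (hp : ∀ ℓ, p ℓ ∈ Mgrid m)
    (hΩ : OmegaNonempty m d s p) :
    ((2 : ℝ) ^ (m + 4))⁻¹ * ((2 : ℝ) ^ m - 1) ^ d ≤
      ((@Finset.filter (Fin d → Fin (2 ^ m))
          (fun z => (∀ ℓ, 1 ≤ (z ℓ : ℕ)) ∧
            ∀ ℓ, p ℓ ≤ ((z ℓ : ℕ) : ℝ) / 2 ^ m ∧
              ((z ℓ : ℕ) : ℝ) / 2 ^ m ≤ p ℓ + ((s ℓ : ℝ) - 1) / 2 ^ m)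
          (Classical.decPred _) Finset.univ).card : ℝ) := by
  choose i hi _ hpi using hp
  have his : ∀ ℓ, i ℓ + s ℓ ≤ 2 ^ m := fun ℓ ↦ hΩ.add_le_two_pow (hpi ℓ)
  have hsN : ∀ ℓ, s ℓ + 1 ≤ 2 ^ m := fun ℓ ↦ by linarith [hi ℓ, his ℓ]
  rw [card_filter_grid_box hpi hi his, pow_add, inv_mul_le_iff₀ (by positivity)]
  push_cast
  have key := pow_sub_one_le_sixteen_mul_prod (N := (2 : ℝ) ^ m) (one_le_pow₀ one_le_two)
    (fun ℓ ↦ Nat.one_le_cast.2 (hΩ.one_le ℓ)) (fun ℓ ↦ by exact_mod_cast hsN ℓ)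
    (by simpa only [Fintype.card_fin] using hΩ.pow_lt_mul_prod)
  rw [Fintype.card_fin] at key
  linarith

/-- Lemma of Ullrich–Vybíral: for `(s,p) ∈ 𝕀_m`, a uniformly random `z ∈ M_m^d` lies in
`B_m(s,p) = ∏_ℓ [p_ℓ, p_ℓ + (s_ℓ-1)/2^m]` with probability at least `2^{-(m+4)}`.
Stated via counting: `#{z ∈ M_m^d : z ∈ B_m(s,p)} ≥ 2^{-(m+4)}·(2^m-1)^d`. -/
theorem stmt_15 (m d : ℕ) (hm : 1 ≤ m) (hd : 1 ≤ d)
    (s : Fin d → ℕ) (hs : ∀ ℓ, s ℓ ≤ 2 ^ m - 1)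
    (p : Fin d → ℝ) (hp : ∀ ℓ, p ℓ ∈ Mgrid m)
    (hΩ : OmegaNonempty m d s p) :
    ((2 : ℝ) ^ (m + 4))⁻¹ * ((2 : ℝ) ^ m - 1) ^ d ≤
      ((@Finset.filter (Fin d → Fin (2 ^ m))
          (fun z => (∀ ℓ, 1 ≤ (z ℓ : ℕ)) ∧
            ∀ ℓ, p ℓ ≤ ((z ℓ : ℕ) : ℝ) / 2 ^ m ∧
              ((z ℓ : ℕ) : ℝ) / 2 ^ m ≤ p ℓ + ((s ℓ : ℝ) - 1) / 2 ^ m)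
          (Classical.decPred _) Finset.univ).card : ℝ) :=
  stmt_15_general m d s p hp hΩ
end

section
/- Let m ≥ 1, d ≥ 2, and N be an integer with N > m·2^{2m+4}·log(2^{m+3} d). Then there exists a point set P ⊆ M_m^d with #P ≤ N such that P intersects B_m(s,p) for every (s,p) ∈ I_m; consequently disp(P) ≤ 2^{-m}. -/
/-!
Probabilistic method. Encode a point `x ∈ M_m^d` by `2^m x ∈ {1, …, 2^m - 1}^d`. For
`(s, p) ∈ I_m`, the set `B_m(s,p)` contains `∏ s_ℓ` grid points, and `2^{-m} < ∏ (s_ℓ + 1)/2^m`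
makes this at least a `2^{-(m+2)}`-fraction of the grid: coordinatewise
`m log((s+1)/2^m) ≤ (m-1) log(s/(2^m-1))`, by quasi-concavity of `t ↦ (m-1) log t - m log(t+1)`.
The same condition leaves fewer than `m 2^m` coordinates with `s_ℓ ≠ 2^m - 1`, and on the
others `p_ℓ = 2^{-m}`; so there are fewer than `(d 4^m)^{m 2^m}` pairs `(s, p)`, and a union
bound shows that `N` uniform grid points meet every `B_m(s,p)` with positive probability.
Finally every box of volume `> 2^{-m}` contains some `B_m(s,p)` in its interior.
-/

open Finset Fintype Real

theorem exists_tuple_forall_exists_mem {α ι : Type*} [DecidableEq α] {U : Finset α}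
    (hU : U.Nonempty) {E : Finset ι} {H : ι → Finset α} (hHU : ∀ e ∈ E, H e ⊆ U) {ε : ℝ}
    (hH : ∀ e ∈ E, ε * #U ≤ #(H e)) {N : ℕ} (hN : #E * (1 - ε) ^ N < 1) :
    ∃ w : Fin N → α, (∀ i, w i ∈ U) ∧ ∀ e ∈ E, ∃ i, w i ∈ H e := by
  set bad := E.biUnion fun e ↦ piFinset fun _ : Fin N ↦ U \ H e
  have hbad : (#bad : ℝ) < #(piFinset fun _ : Fin N ↦ U) := by
    have hUpos : (0 : ℝ) < #U ^ N := by positivity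
    calc (#bad : ℝ) ≤ ∑ e ∈ E, (#(U \ H e) : ℝ) ^ N := by
          exact_mod_cast card_biUnion_le.trans_eq (by simp [card_piFinset])
      _ ≤ ∑ e ∈ E, ((1 - ε) * #U) ^ N := by
          refine sum_le_sum fun e he ↦ pow_le_pow_left₀ (by positivity) ?_ N
          rw [card_sdiff_of_subset (hHU e he), Nat.cast_sub (card_le_card (hHU e he))]
          linarith [hH e he]
      _ = #E * (1 - ε) ^ N * #U ^ N := by rw [sum_const, nsmul_eq_mul, mul_pow, mul_assoc]
      _ < #U ^ N := mul_lt_of_lt_one_left hUpos hN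
      _ = _ := by simp [card_piFinset]
  obtain ⟨w, hw, hwbad⟩ := exists_mem_notMem_of_card_lt_card (by exact_mod_cast hbad)
  rw [mem_piFinset] at hw
  refine ⟨w, hw, fun e he ↦ ?_⟩
  by_contra! hmiss
  exact hwbad (mem_biUnion.2 ⟨e, he, mem_piFinset.2 fun i ↦ mem_sdiff.2 ⟨hw i, hmiss i⟩⟩)

theorem min_le_mul_log_sub_mul_log_add_one {a b y x z : ℝ} (hab : a ≤ b) (hy : 0 < y)
    (hyx : y ≤ x) (hxz : x ≤ z) :
    min (a * log y - b * log (y + 1)) (a * log z - b * log (z + 1)) ≤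
      a * log x - b * log (x + 1) := by
  set φ : ℝ → ℝ := fun t ↦ a * log t - b * log (t + 1)
  have hφ : ∀ t, 0 < t → HasDerivAt φ (a / t - b / (t + 1)) t := fun t ht ↦ by
    have h1 := (hasDerivAt_log ht.ne').const_mul a
    have h2 := (((hasDerivAt_id t).add_const 1).log (by simp; linarith)).const_mul b
    exact (h1.sub h2).congr_deriv (by simp [div_eq_mul_inv])
  have hcont (u v : ℝ) (hu : 0 < u) : ContinuousOn φ (Set.Icc u v) := fun t ht ↦
    (hφ t (hu.trans_le ht.1)).continuousAt.continuousWithinAt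
  -- `φ' t` has the sign of `a - (b - a) * t`, so `φ` increases, then decreases
  rcases le_total ((b - a) * x) a with hx | hx
  · refine min_le_of_left_le (monotoneOn_of_hasDerivWithinAt_nonneg (convex_Icc y x)
      (hcont y x hy) (fun t ht ↦ (hφ t ?_).hasDerivWithinAt) (fun t ht ↦ ?_)
      ⟨le_rfl, hyx⟩ ⟨hyx, le_rfl⟩ hyx)
    all_goals rw [interior_Icc] at ht
    · linarith [ht.1]
    · have ht0 : 0 < t := by linarith [ht.1]
      rw [sub_nonneg, div_le_div_iff₀ (by linarith) ht0]
      nlinarith [ht.2]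
  · refine min_le_of_right_le (antitoneOn_of_hasDerivWithinAt_nonpos (convex_Icc x z)
      (hcont x z (hy.trans_le hyx)) (fun t ht ↦ (hφ t ?_).hasDerivWithinAt) (fun t ht ↦ ?_)
      ⟨le_rfl, hxz⟩ ⟨hxz, le_rfl⟩ hxz)
    all_goals rw [interior_Icc] at ht
    · linarith [ht.1]
    · have ht0 : 0 < t := by linarith [ht.1]
      rw [sub_nonpos, div_le_div_iff₀ ht0 (by linarith)]
      nlinarith [ht.1]

theorem card_filter_powerset_card_lt_lt {α : Type*} [DecidableEq α] {X : Finset α}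
    (hX : 2 ≤ #X) (M : ℕ) :
    #{T ∈ X.powerset | #T < M} < #X ^ M := by
  calc #{T ∈ X.powerset | #T < M} ≤ #((range M).biUnion fun k ↦ X.powersetCard k) := by
        refine card_le_card fun T hT ↦ ?_
        rw [mem_filter, mem_powerset] at hT
        exact mem_biUnion.2 ⟨#T, mem_range.2 hT.2, mem_powersetCard.2 ⟨hT.1, rfl⟩⟩
    _ ≤ ∑ k ∈ range M, #X ^ k := card_biUnion_le.trans <| sum_le_sum fun k _ ↦ by
        rw [card_powersetCard]; exact Nat.choose_le_pow _ _
    _ < #X ^ M := Nat.geomSum_lt hX fun k hk ↦ mem_range.1 hk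

theorem prod_le_of_forall_mem_Icc {ι : Type*} [Fintype ι] [DecidableEq ι] {f : ι → ℝ}
    (hf : ∀ i, f i ∈ Set.Icc 0 1) (i : ι) : ∏ j, f j ≤ f i := by
  rw [← mul_prod_erase univ f (mem_univ i)]
  exact mul_le_of_le_one_right (hf i).1
    (prod_le_one (fun j _ ↦ (hf j).1) fun j _ ↦ (hf j).2)

section Grid

variable {m d : ℕ}

/-- A grid point `x ∈ M_m^d` is encoded by `2^m x ∈ gridCube m d`, and a pair `(s, p)` by
`(s, 2^m p)`; then `gridBox s j` encodes `B_m(s,p) ∩ M_m^d`, and `gridEvents` keeps the pairs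
satisfying the constraints that `Ω_m(s,p) ≠ ∅` imposes. -/
def gridCube (m d : ℕ) : Finset (Fin d → ℕ) := piFinset fun _ ↦ Icc 1 (2 ^ m - 1)

def gridBox {d : ℕ} (s j : Fin d → ℕ) : Finset (Fin d → ℕ) :=
  piFinset fun ℓ ↦ Ico (j ℓ) (j ℓ + s ℓ)

noncomputable def gridEvents (m d : ℕ) : Finset ((Fin d → ℕ) × (Fin d → ℕ)) :=
  {e ∈ gridCube m d ×ˢ gridCube m d | (∀ ℓ, e.1 ℓ + e.2 ℓ ≤ 2 ^ m) ∧
    ((2 : ℝ) ^ m)⁻¹ < ∏ ℓ, ((e.1 ℓ : ℝ) + 1) / 2 ^ m}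

theorem mem_gridCube {x : Fin d → ℕ} : x ∈ gridCube m d ↔ ∀ ℓ, 1 ≤ x ℓ ∧ x ℓ ≤ 2 ^ m - 1 := by
  simp [gridCube]

theorem card_gridCube : #(gridCube m d) = (2 ^ m - 1) ^ d := by
  simp [gridCube]

theorem card_gridBox (s j : Fin d → ℕ) : #(gridBox s j) = ∏ ℓ, s ℓ := by
  simp [gridBox]

theorem mem_gridEvents {e : (Fin d → ℕ) × (Fin d → ℕ)} :
    e ∈ gridEvents m d ↔ (e.1 ∈ gridCube m d ∧ e.2 ∈ gridCube m d) ∧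
      (∀ ℓ, e.1 ℓ + e.2 ℓ ≤ 2 ^ m) ∧ ((2 : ℝ) ^ m)⁻¹ < ∏ ℓ, ((e.1 ℓ : ℝ) + 1) / 2 ^ m := by
  simp [gridEvents]

theorem gridBox_subset_gridCube {e : (Fin d → ℕ) × (Fin d → ℕ)} (he : e ∈ gridEvents m d) :
    gridBox e.1 e.2 ⊆ gridCube m d := by
  obtain ⟨⟨hs, hj⟩, hsj, -⟩ := mem_gridEvents.1 he
  intro x hx
  rw [gridBox, mem_piFinset] at hx
  refine mem_gridCube.2 fun ℓ ↦ ?_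
  have := mem_Ico.1 (hx ℓ)
  have := mem_gridCube.1 hj ℓ
  have := hsj ℓ
  omega

theorem mul_log_add_one_div_le (hm : 1 ≤ m) {x : ℝ} (hx1 : 1 ≤ x) (hx : x ≤ 2 ^ m - 1) :
    m * log ((x + 1) / 2 ^ m) ≤ (m - 1) * log (x / (2 ^ m - 1)) := by
  have hm' : (1 : ℝ) ≤ m := by exact_mod_cast hm
  have hlog : log ((2 : ℝ) ^ m - 1) ≤ m * log 2 := by
    rw [← log_pow]; exact log_le_log (by linarith) (by linarith)
  have h := min_le_mul_log_sub_mul_log_add_one (a := m - 1) (b := m) (by linarith) one_pos hx1 hx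
  rw [min_eq_right (by rw [sub_add_cancel, log_pow, log_one, one_add_one_eq_two]; nlinarith)] at h
  rw [sub_add_cancel, log_pow] at h
  rw [log_div (by linarith) (by positivity), log_div (by linarith) (by linarith), log_pow]
  linear_combination h

theorem inv_two_pow_mul_le_prod (hm : 1 ≤ m) {s : Fin d → ℕ}
    (hs : ∀ ℓ, 1 ≤ s ℓ ∧ s ℓ ≤ 2 ^ m - 1)
    (hvol : ((2 : ℝ) ^ m)⁻¹ < ∏ ℓ, ((s ℓ : ℝ) + 1) / 2 ^ m) :
    ((2 : ℝ) ^ (m + 2))⁻¹ * (2 ^ m - 1) ^ d ≤ ∏ ℓ, (s ℓ : ℝ) := by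
  have hn : (2 : ℝ) ≤ 2 ^ m := by simpa using pow_le_pow_right₀ one_le_two hm
  have hsR (ℓ : Fin d) : 1 ≤ (s ℓ : ℝ) ∧ (s ℓ : ℝ) ≤ 2 ^ m - 1 := by
    have h2m : s ℓ + 1 ≤ 2 ^ m := by have := hs ℓ; omega
    refine ⟨by exact_mod_cast (hs ℓ).1, ?_⟩
    have : (s ℓ : ℝ) + 1 ≤ 2 ^ m := by exact_mod_cast h2m
    linarith
  set A := ∏ ℓ, (s ℓ : ℝ) / (2 ^ m - 1) with hA_def
  have hA : 0 < A := prod_pos fun ℓ _ ↦ div_pos (by linarith [hsR ℓ]) (by linarith)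
  have hlogA : -((m + 2) * log 2) ≤ log A := by
    rcases hm.eq_or_lt with rfl | hm2
    · have : 0 ≤ log A := by
        rw [log_prod fun ℓ _ ↦ by have := (hs ℓ).1; norm_num; omega]
        exact sum_nonneg fun ℓ _ ↦ log_nonneg (by norm_num; exact (hs ℓ).1)
      push_cast
      linarith [log_pos one_lt_two]
    · have hB := log_lt_log (by positivity) hvol
      rw [log_inv, log_pow, log_prod fun ℓ _ ↦ by positivity] at hB
      have hsum : m * ∑ ℓ, log (((s ℓ : ℝ) + 1) / 2 ^ m) ≤ (m - 1) * log A := by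
        rw [log_prod fun ℓ _ ↦ (div_pos (by linarith [hsR ℓ]) (by linarith)).ne', mul_sum,
          mul_sum]
        exact sum_le_sum fun ℓ _ ↦ mul_log_add_one_div_le hm (hsR ℓ).1 (hsR ℓ).2
      have hm2' : (2 : ℝ) ≤ m := by exact_mod_cast hm2
      nlinarith [log_pos one_lt_two]
  have hεA : ((2 : ℝ) ^ (m + 2))⁻¹ ≤ A := by
    rw [← exp_log hA, ← exp_log (by positivity : (0 : ℝ) < (2 ^ (m + 2))⁻¹), log_inv, log_pow]
    exact exp_le_exp.2 (by push_cast; linarith)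
  calc ((2 : ℝ) ^ (m + 2))⁻¹ * (2 ^ m - 1) ^ d ≤ A * (2 ^ m - 1) ^ d := by
        gcongr; exact pow_nonneg (by linarith) d
    _ = ∏ ℓ, (s ℓ : ℝ) := by
      rw [hA_def, prod_div_distrib, prod_const, card_univ, Fintype.card_fin,
        div_mul_cancel₀ _ (pow_ne_zero d (by linarith))]

theorem card_filter_ne_lt {s : Fin d → ℕ} (hs : ∀ ℓ, s ℓ ≤ 2 ^ m - 1)
    (hvol : ((2 : ℝ) ^ m)⁻¹ < ∏ ℓ, ((s ℓ : ℝ) + 1) / 2 ^ m) :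
    #{ℓ | s ℓ ≠ 2 ^ m - 1} < m * 2 ^ m := by
  set k := #{ℓ | s ℓ ≠ 2 ^ m - 1}
  have hn : (0 : ℝ) < 2 ^ m := by positivity
  have hn1 : ((2 : ℝ) ^ m)⁻¹ ≤ 1 := inv_le_one_of_one_le₀ (one_le_pow₀ one_le_two)
  have hprod : ∏ ℓ, ((s ℓ : ℝ) + 1) / 2 ^ m ≤ (1 - ((2 : ℝ) ^ m)⁻¹) ^ k := by
    calc ∏ ℓ, ((s ℓ : ℝ) + 1) / 2 ^ m
        ≤ ∏ ℓ, if s ℓ ≠ 2 ^ m - 1 then 1 - ((2 : ℝ) ^ m)⁻¹ else 1 := by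
          refine prod_le_prod (fun ℓ _ ↦ by positivity) fun ℓ _ ↦ ?_
          have h2m : s ℓ + 1 ≤ 2 ^ m := by have := hs ℓ; have := m.one_le_two_pow; omega
          split_ifs with h
          · have : (s ℓ : ℝ) + 2 ≤ 2 ^ m := by exact_mod_cast (by omega : s ℓ + 2 ≤ 2 ^ m)
            rw [div_le_iff₀ hn, sub_mul, inv_mul_cancel₀ hn.ne']
            linarith
          · rw [div_le_one hn]
            exact_mod_cast h2m
      _ = (1 - ((2 : ℝ) ^ m)⁻¹) ^ k := by rw [prod_ite, prod_const_one, mul_one, prod_const]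
  have hexp : (1 - ((2 : ℝ) ^ m)⁻¹) ^ k ≤ exp (-(k / 2 ^ m)) := by
    calc (1 - ((2 : ℝ) ^ m)⁻¹) ^ k ≤ exp (-((2 : ℝ) ^ m)⁻¹) ^ k :=
          pow_le_pow_left₀ (by linarith) (one_sub_le_exp_neg _) k
      _ = exp (-(k / 2 ^ m)) := by rw [← exp_nat_mul]; ring_nf
  have hlog := log_lt_log (by positivity) ((hvol.trans_le hprod).trans_le hexp)
  rw [log_inv, log_pow, log_exp] at hlog
  have hk : (k : ℝ) / 2 ^ m < m := by
    nlinarith [log_two_lt_d9, (Nat.cast_nonneg m : (0 : ℝ) ≤ m)]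
  exact_mod_cast (div_lt_iff₀ hn).1 hk

theorem card_gridEvents_lt (hd : 2 ≤ d) (hm : 1 ≤ m) :
    #(gridEvents m d) < (d * (2 ^ m - 1) ^ 2) ^ (m * 2 ^ m) := by
  set X := (univ : Finset (Fin d)) ×ˢ (Icc 1 (2 ^ m - 1) ×ˢ Icc 1 (2 ^ m - 1))
  have hX : #X = d * (2 ^ m - 1) ^ 2 := by simp [X, sq]
  -- an event is determined by its coordinates with `s ℓ ≠ 2 ^ m - 1`, as `j ℓ = 1` on the others
  set code : (Fin d → ℕ) × (Fin d → ℕ) → Finset (Fin d × ℕ × ℕ) :=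
    fun e ↦ image (fun ℓ ↦ (ℓ, e.1 ℓ, e.2 ℓ)) {ℓ | e.1 ℓ ≠ 2 ^ m - 1}
  have hcode {e e'} (h : code e = code e') (ℓ) (hℓ : e.1 ℓ ≠ 2 ^ m - 1) :
      e'.1 ℓ = e.1 ℓ ∧ e'.2 ℓ = e.2 ℓ := by
    have : (ℓ, e.1 ℓ, e.2 ℓ) ∈ code e' := h ▸ mem_image_of_mem _ (by simpa using hℓ)
    simp only [code, mem_image, mem_filter, Prod.mk.injEq] at this
    obtain ⟨_, -, rfl, h1, h2⟩ := this
    exact ⟨h1, h2⟩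
  have hfull {e} (he : e ∈ gridEvents m d) (ℓ) (hℓ : e.1 ℓ = 2 ^ m - 1) : e.2 ℓ = 1 := by
    obtain ⟨⟨-, hj⟩, hsj, -⟩ := mem_gridEvents.1 he
    have := mem_gridCube.1 hj ℓ
    have := hsj ℓ
    have := m.one_le_two_pow
    omega
  calc #(gridEvents m d) ≤ #{T ∈ X.powerset | #T < m * 2 ^ m} := by
        refine card_le_card_of_injOn code (fun e he ↦ ?_) fun e he e' he' h ↦ ?_
        · obtain ⟨⟨hs, hj⟩, -, hvol⟩ := mem_gridEvents.1 he
          refine mem_filter.2 ⟨mem_powerset.2 fun t ht ↦ ?_,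
            card_image_le.trans_lt (card_filter_ne_lt (fun ℓ ↦ (mem_gridCube.1 hs ℓ).2) hvol)⟩
          obtain ⟨ℓ, -, rfl⟩ := mem_image.1 ht
          simpa [X] using ⟨mem_gridCube.1 hs ℓ, mem_gridCube.1 hj ℓ⟩
        · have h' (ℓ) : e.1 ℓ = e'.1 ℓ ∧ e.2 ℓ = e'.2 ℓ := by
            by_cases h1 : e.1 ℓ = 2 ^ m - 1 <;> by_cases h2 : e'.1 ℓ = 2 ^ m - 1
            · exact ⟨h1.trans h2.symm, (hfull he ℓ h1).trans (hfull he' ℓ h2).symm⟩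
            · exact hcode h.symm ℓ h2
            all_goals exact ⟨(hcode h ℓ h1).1.symm, (hcode h ℓ h1).2.symm⟩
          exact Prod.ext (funext fun ℓ ↦ (h' ℓ).1) (funext fun ℓ ↦ (h' ℓ).2)
    _ < #X ^ (m * 2 ^ m) := by
        refine card_filter_powerset_card_lt_lt ?_ _
        have : 1 ≤ 2 ^ m - 1 := by have := Nat.pow_le_pow_right two_pos hm; omega
        rw [hX]
        nlinarith [Nat.one_le_pow 2 _ this]
    _ = _ := by rw [hX]

theorem card_gridEvents_mul_lt_one (hm : 1 ≤ m) (hd : 2 ≤ d) {N : ℕ}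
    (hN : (N : ℝ) > (m : ℝ) * 2 ^ (2 * m + 4) * log (2 ^ (m + 3) * (d : ℝ))) :
    (#(gridEvents m d) : ℝ) * (1 - ((2 : ℝ) ^ (m + 2))⁻¹) ^ N < 1 := by
  set L := log (2 ^ (m + 3) * (d : ℝ))
  set M := m * 2 ^ m
  have hd' : (2 : ℝ) ≤ d := by exact_mod_cast hd
  have hL : 0 < L := log_pos (by nlinarith [one_le_pow₀ (M₀ := ℝ) one_le_two (n := m + 3)])
  have hE : (#(gridEvents m d) : ℝ) ≤ exp (2 * M * L) := by
    have hbase : d * (2 ^ m - 1) ^ 2 ≤ (2 ^ (m + 3) * d) ^ 2 := by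
      calc d * (2 ^ m - 1) ^ 2 ≤ d ^ 2 * (2 ^ (m + 3)) ^ 2 := by
            gcongr
            · nlinarith
            · exact (Nat.sub_le _ _).trans (Nat.pow_le_pow_right two_pos (by omega))
        _ = (2 ^ (m + 3) * d) ^ 2 := by ring
    calc (#(gridEvents m d) : ℝ) ≤ (((2 ^ (m + 3) * d) ^ 2) ^ M : ℕ) := by
          exact_mod_cast (card_gridEvents_lt hd hm).le.trans (Nat.pow_le_pow_left hbase M)
      _ = exp (2 * M * L) := by
          have hexpL : exp L = 2 ^ (m + 3) * d := exp_log (by positivity)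
          rw [show 2 * (M : ℝ) * L = M * (L + L) by ring, exp_nat_mul, exp_add, hexpL]
          push_cast; ring
  have hq : (1 - ((2 : ℝ) ^ (m + 2))⁻¹) ^ N ≤ exp (-(N * ((2 : ℝ) ^ (m + 2))⁻¹)) := by
    rw [neg_mul_eq_mul_neg, exp_nat_mul]
    exact pow_le_pow_left₀ (sub_nonneg.2 (inv_le_one_of_one_le₀ (one_le_pow₀ one_le_two)))
      (one_sub_le_exp_neg _) N
  have hNM : 2 * M * L < N * ((2 : ℝ) ^ (m + 2))⁻¹ := by
    have hM : (0 : ℝ) < M := by positivity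
    calc 2 * M * L < 4 * M * L := by nlinarith
      _ = m * 2 ^ (2 * m + 4) * L * ((2 : ℝ) ^ (m + 2))⁻¹ := by
          simp only [M]; push_cast; field_simp; ring
      _ < N * ((2 : ℝ) ^ (m + 2))⁻¹ := by gcongr
  calc (#(gridEvents m d) : ℝ) * (1 - ((2 : ℝ) ^ (m + 2))⁻¹) ^ N
      ≤ exp (2 * M * L) * exp (-(N * ((2 : ℝ) ^ (m + 2))⁻¹)) :=
        mul_le_mul hE hq (pow_nonneg (sub_nonneg.2
          (inv_le_one_of_one_le₀ (one_le_pow₀ one_le_two))) N) (exp_pos _).le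
    _ < 1 := by rw [← exp_add, exp_lt_one_iff]; linarith

theorem exists_tuple_mem_gridBox (hm : 1 ≤ m) (hd : 2 ≤ d) {N : ℕ}
    (hN : (N : ℝ) > (m : ℝ) * 2 ^ (2 * m + 4) * log (2 ^ (m + 3) * (d : ℝ))) :
    ∃ w : Fin N → Fin d → ℕ, (∀ i, w i ∈ gridCube m d) ∧
      ∀ e ∈ gridEvents m d, ∃ i, w i ∈ gridBox e.1 e.2 := by
  refine exists_tuple_forall_exists_mem ⟨fun _ ↦ 1, mem_gridCube.2 fun _ ↦ ⟨le_rfl, ?_⟩⟩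
    (fun e he ↦ gridBox_subset_gridCube he) (fun e he ↦ ?_) (card_gridEvents_mul_lt_one hm hd hN)
  · have := Nat.pow_le_pow_right two_pos hm; omega
  · obtain ⟨⟨hs, -⟩, -, hvol⟩ := mem_gridEvents.1 he
    have h1 : 1 ≤ 2 ^ m := m.one_le_two_pow
    rw [card_gridCube, card_gridBox]
    push_cast [Nat.cast_sub h1]
    exact inv_two_pow_mul_le_prod hm (mem_gridCube.1 hs) hvol


end Grid

/-- `P` meets `B_m(s,p)` for every `(s,p) ∈ I_m`, where
`B_m(s,p) = ∏ ℓ, [p ℓ, p ℓ + (s ℓ - 1)/2^m]`. -/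
def MeetsEveryB (m d : ℕ) (P : Finset (Fin d → ℝ)) : Prop :=
  ∀ (s : Fin d → ℕ) (p : Fin d → ℝ), (∀ ℓ, s ℓ ≤ 2 ^ m - 1) →
    (∀ ℓ, p ℓ ∈ Mgrid m) → OmegaNonempty m d s p →
    ∃ x ∈ P, ∀ ℓ, p ℓ ≤ x ℓ ∧ x ℓ ≤ p ℓ + ((s ℓ : ℝ) - 1) / 2 ^ m

section Boxes

variable {m d : ℕ}

theorem mem_gridEvents_of_omegaNonempty {s j : Fin d → ℕ} (hs : ∀ ℓ, s ℓ ≤ 2 ^ m - 1)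
    (hj : j ∈ gridCube m d) (hΩ : OmegaNonempty m d s fun ℓ ↦ (j ℓ : ℝ) / 2 ^ m) :
    (s, j) ∈ gridEvents m d := by
  obtain ⟨a, b, hab, hvol, hloc⟩ := hΩ
  have hn : (0 : ℝ) < 2 ^ m := by positivity
  have hside (ℓ : Fin d) : b ℓ - a ℓ ∈ Set.Icc 0 1 :=
    ⟨by linarith [hab ℓ], by linarith [hab ℓ]⟩
  refine mem_gridEvents.2 ⟨⟨mem_gridCube.2 fun ℓ ↦ ⟨?_, hs ℓ⟩, hj⟩, fun ℓ ↦ ?_, ?_⟩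
  · have h := (hvol.trans_le (prod_le_of_forall_mem_Icc hside ℓ)).trans_le (hloc ℓ).2.1
    rw [inv_eq_one_div, div_lt_div_iff_of_pos_right hn] at h
    exact_mod_cast (by linarith : (0 : ℝ) < s ℓ)
  · obtain ⟨h1, -, h3, -⟩ := hloc ℓ
    have h : ((s ℓ : ℝ) + j ℓ - 1) / 2 ^ m < 1 := by
      rw [sub_div, add_div, one_div]
      linarith [(hab ℓ).2.2]
    rw [div_lt_one hn] at h
    have : s ℓ + j ℓ < 2 ^ m + 1 := by
      exact_mod_cast (by linarith : (s ℓ : ℝ) + j ℓ < 2 ^ m + 1)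
    show s ℓ + j ℓ ≤ 2 ^ m
    omega
  · exact hvol.trans_le (prod_le_prod (fun ℓ _ ↦ (hside ℓ).1) fun ℓ _ ↦ (hloc ℓ).2.1)

theorem exists_grid_interval {a b : ℝ} (ha : 0 ≤ a) (hb : b ≤ 1)
    (hab : ((2 : ℝ) ^ m)⁻¹ < b - a) :
    ∃ s j : ℕ, s ≤ 2 ^ m - 1 ∧ (1 ≤ j ∧ j ≤ 2 ^ m - 1) ∧
      (s : ℝ) / 2 ^ m < b - a ∧ b - a ≤ ((s : ℝ) + 1) / 2 ^ m ∧
      (j : ℝ) / 2 ^ m - ((2 : ℝ) ^ m)⁻¹ ≤ a ∧ a < (j : ℝ) / 2 ^ m ∧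
      (j : ℝ) / 2 ^ m + ((s : ℝ) - 1) / 2 ^ m < b := by
  have hn : (0 : ℝ) < 2 ^ m := by positivity
  have hab' : 1 < (b - a) * 2 ^ m := by rwa [inv_eq_one_div, div_lt_iff₀ hn] at hab
  have hceil : ⌈(b - a) * 2 ^ m⌉₊ ≤ 2 ^ m :=
    Nat.ceil_le.2 (by push_cast; nlinarith)
  have hceil1 : 1 ≤ ⌈(b - a) * 2 ^ m⌉₊ := Nat.one_le_iff_ne_zero.2 (by positivity)
  have hfloor : ⌊a * 2 ^ m⌋₊ < 2 ^ m - 1 := by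
    refine (Nat.floor_lt (by positivity)).2 ?_
    rw [Nat.cast_sub m.one_le_two_pow]
    push_cast
    nlinarith
  have hs := Nat.ceil_lt_add_one (by positivity : 0 ≤ (b - a) * 2 ^ m)
  have hs' := Nat.le_ceil ((b - a) * 2 ^ m)
  have hj := Nat.floor_le (by positivity : 0 ≤ a * 2 ^ m)
  have hj' := Nat.lt_floor_add_one (a * 2 ^ m)
  refine ⟨⌈(b - a) * 2 ^ m⌉₊ - 1, ⌊a * 2 ^ m⌋₊ + 1, by omega, ⟨by omega, by omega⟩, ?_⟩
  rw [Nat.cast_sub hceil1]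
  push_cast
  simp only [← sub_div, ← add_div, inv_eq_one_div, div_lt_iff₀ hn, le_div_iff₀ hn, div_le_iff₀ hn,
    lt_div_iff₀ hn]
  refine ⟨by linarith, by linarith, by linarith, by linarith, by nlinarith⟩

theorem prod_sub_le_of_meetsEveryB {P : Finset (Fin d → ℝ)} (hP : MeetsEveryB m d P)
    (a b : Fin d → ℝ) (I : Fin d → Set ℝ) (hab : ∀ j, 0 ≤ a j ∧ a j ≤ b j ∧ b j ≤ 1)
    (hI : ∀ j, Set.Ioo (a j) (b j) ⊆ I j) (hmiss : ∀ x ∈ P, ∃ j, x j ∉ I j) :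
    ∏ j, (b j - a j) ≤ ((2 : ℝ) ^ m)⁻¹ := by
  by_contra! hvol
  have hside (ℓ : Fin d) : b ℓ - a ℓ ∈ Set.Icc 0 1 :=
    ⟨by linarith [hab ℓ], by linarith [hab ℓ]⟩
  choose s j hs hj h1 h2 h3 h4 h5 using fun ℓ ↦ exists_grid_interval (hab ℓ).1 (hab ℓ).2.2
    (hvol.trans_le (prod_le_of_forall_mem_Icc hside ℓ))
  obtain ⟨x, hxP, hx⟩ := hP s (fun ℓ ↦ j ℓ / 2 ^ m) hs (fun ℓ ↦ ⟨j ℓ, (hj ℓ).1, (hj ℓ).2, rfl⟩)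
    ⟨a, b, hab, hvol, fun ℓ ↦ ⟨h1 ℓ, h2 ℓ, h3 ℓ, h4 ℓ⟩⟩
  obtain ⟨ℓ, hℓ⟩ := hmiss x hxP
  exact hℓ (hI ℓ ⟨(h4 ℓ).trans_le (hx ℓ).1, (hx ℓ).2.trans_lt (h5 ℓ)⟩)

theorem exists_finset_meetsEveryB (hm : 1 ≤ m) (hd : 2 ≤ d) {N : ℕ}
    (hN : (N : ℝ) > (m : ℝ) * 2 ^ (2 * m + 4) * log (2 ^ (m + 3) * (d : ℝ))) :
    ∃ P : Finset (Fin d → ℝ), (∀ x ∈ P, ∀ ℓ, x ℓ ∈ Mgrid m) ∧ #P ≤ N ∧ MeetsEveryB m d P := by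
  obtain ⟨w, hw, hhit⟩ := exists_tuple_mem_gridBox hm hd hN
  refine ⟨univ.image fun i ℓ ↦ (w i ℓ : ℝ) / 2 ^ m, ?_, card_image_le.trans (by simp), ?_⟩
  · simp only [mem_image, mem_univ, true_and, forall_exists_index, forall_apply_eq_imp_iff]
    exact fun i ℓ ↦ ⟨w i ℓ, (mem_gridCube.1 (hw i) ℓ).1, (mem_gridCube.1 (hw i) ℓ).2, rfl⟩
  · intro s p hs hp hΩ
    choose j hj1 hj2 hpj using hp
    obtain rfl : p = fun ℓ ↦ (j ℓ : ℝ) / 2 ^ m := funext hpj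
    obtain ⟨i, hi⟩ := hhit (s, j)
      (mem_gridEvents_of_omegaNonempty hs (mem_gridCube.2 fun ℓ ↦ ⟨hj1 ℓ, hj2 ℓ⟩) hΩ)
    refine ⟨_, mem_image_of_mem _ (mem_univ i), fun ℓ ↦ ?_⟩
    have hwi := mem_Ico.1 (mem_piFinset.1 hi ℓ)
    have h1 : (j ℓ : ℝ) ≤ w i ℓ := by exact_mod_cast hwi.1
    have h2 : (w i ℓ : ℝ) + 1 ≤ j ℓ + s ℓ := by exact_mod_cast hwi.2
    constructor
    · dsimp only
      gcongr
    · dsimp only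
      rw [← add_div]
      gcongr
      linarith

end Boxes

/-- If `N > m·2^{2m+4}·log(2^{m+3}·d)`, there is `P ⊆ M_m^d` with `#P ≤ N` meeting
`B_m(s,p)` for every `(s,p) ∈ 𝕀_m`; consequently `disp(P) ≤ 2^{-m}`. -/
theorem stmt_16 (m d N : ℕ) (hm : 1 ≤ m) (hd : 2 ≤ d)
    (hN : (N : ℝ) > (m : ℝ) * 2 ^ (2 * m + 4) * Real.log (2 ^ (m + 3) * (d : ℝ))) :
    ∃ P : Finset (Fin d → ℝ),
      (∀ x ∈ P, ∀ ℓ, x ℓ ∈ Mgrid m) ∧ P.card ≤ N ∧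
      (∀ (s : Fin d → ℕ) (p : Fin d → ℝ), (∀ ℓ, s ℓ ≤ 2 ^ m - 1) →
        (∀ ℓ, p ℓ ∈ Mgrid m) → OmegaNonempty m d s p →
        ∃ x ∈ P, ∀ ℓ, p ℓ ≤ x ℓ ∧ x ℓ ≤ p ℓ + ((s ℓ : ℝ) - 1) / 2 ^ m) ∧
      ∀ (a b : Fin d → ℝ) (I : Fin d → Set ℝ),
        (∀ j, 0 ≤ a j ∧ a j ≤ b j ∧ b j ≤ 1) →
        (∀ j, Set.Ioo (a j) (b j) ⊆ I j ∧ I j ⊆ Set.Icc (a j) (b j)) →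
        (∀ x ∈ P, ∃ j, x j ∉ I j) →
        ∏ j, (b j - a j) ≤ ((2 : ℝ) ^ m)⁻¹ := by
  obtain ⟨P, hgrid, hcard, hP⟩ := exists_finset_meetsEveryB hm hd hN
  exact ⟨P, hgrid, hcard, hP, fun a b I hab hI ↦
    prod_sub_le_of_meetsEveryB hP a b I hab fun j ↦ (hI j).1⟩
end

section
/- Let A(m,d) be a (d, k, k²)-splitter and let T(m) ⊆ {0,...,b-1}^{k²} be a solution of the k-restriction problem with restriction collection C in dimension k². Then T* = {τ ∘ a : τ ∈ T(m), a ∈ A(m,d)} ⊆ {0,...,b-1}^d is a solution of the k-restriction problem with the same (permutation-invariant) restriction collection C in dimension d, and #T* ≤ #T(m) · #A(m,d). -/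
def IsRestrictionSolution {α : Type*} {n k : ℕ} (𝒞 : Set (Finset (Fin k → α)))
    (T : Finset (Fin n → α)) : Prop :=
  ∀ S : Finset (Fin n), ∀ hS : S.card = k, ∀ C ∈ 𝒞, ∃ x ∈ T, restrict x S hS ∈ C

def IsSplitter {d m : ℕ} (k : ℕ) (A : Finset (Fin d → Fin m)) : Prop :=
  ∀ S : Finset (Fin d), S.card = k → ∃ a ∈ A, Set.InjOn a S

section

variable {α : Type*} {d m k : ℕ}

theorem exists_perm_restrict_comp {a : Fin d → Fin m} {S : Finset (Fin d)} (hS : S.card = k)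
    (ha : Set.InjOn a S) (hS' : (S.image a).card = k) :
    ∃ σ : Equiv.Perm (Fin k), ∀ x : Fin m → α,
      restrict (x ∘ a) S hS = restrict x (S.image a) hS' ∘ σ := by
  have hbij : Set.BijOn a (S : Set (Fin d)) (S.image a : Finset (Fin m)) := by
    rw [Finset.coe_image]
    exact ha.bijOn_image
  refine ⟨(S.orderIsoOfFin hS).toEquiv.trans
    ((hbij.equiv a).trans ((S.image a).orderIsoOfFin hS').toEquiv.symm), fun x => ?_⟩
  funext i
  simp [restrict, Set.BijOn.equiv]

theorem comp_perm_mem_of_mem_image [DecidableEq α] {C : Finset (Fin k → α)}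
    {σ : Equiv.Perm (Fin k)} {v : Fin k → α} (hv : v ∈ C.image (· ∘ σ.symm)) : v ∘ σ ∈ C := by
  obtain ⟨w, hw, rfl⟩ := Finset.mem_image.1 hv
  simpa [Function.comp_assoc] using hw

/-- A splitter moves every `k`-set of coordinates in dimension `d` injectively into dimension `m`;
permutation invariance of `𝒞` absorbs the reordering this causes. -/
theorem IsRestrictionSolution.image_comp [DecidableEq α] {𝒞 : Set (Finset (Fin k → α))}
    (h𝒞 : ∀ C ∈ 𝒞, ∀ σ : Equiv.Perm (Fin k), C.image (fun v => v ∘ σ) ∈ 𝒞)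
    {A : Finset (Fin d → Fin m)} (hA : IsSplitter k A)
    {T : Finset (Fin m → α)} (hT : IsRestrictionSolution 𝒞 T) :
    IsRestrictionSolution 𝒞 ((T ×ˢ A).image fun τa => τa.1 ∘ τa.2) := by
  intro S hS C hC
  obtain ⟨a, haA, ha⟩ := hA S hS
  have hS' : (S.image a).card = k := (Finset.card_image_of_injOn ha).trans hS
  obtain ⟨σ, hσ⟩ := exists_perm_restrict_comp (α := α) hS ha hS'
  obtain ⟨τ, hτT, hτC⟩ := hT (S.image a) hS' _ (h𝒞 C hC σ.symm)
  refine ⟨τ ∘ a, Finset.mem_image.2 ⟨(τ, a), Finset.mem_product.2 ⟨hτT, haA⟩, rfl⟩, ?_⟩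
  rw [hσ]
  exact comp_perm_mem_of_mem_image hτC

end

theorem stmt_18_general (b k d : ℕ)
    (𝒞 : Set (Finset (Fin k → Fin b)))
    (hCinv : ∀ C ∈ 𝒞, ∀ σ : Equiv.Perm (Fin k),
      C.image (fun v => v ∘ σ) ∈ 𝒞)
    (A : Finset (Fin d → Fin (k ^ 2)))
    (hA : ∀ S : Finset (Fin d), S.card = k → ∃ a ∈ A, Set.InjOn a S)
    (T : Finset (Fin (k ^ 2) → Fin b))
    (hT : ∀ S' : Finset (Fin (k ^ 2)), ∀ hS' : S'.card = k, ∀ C ∈ 𝒞,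
      ∃ τ ∈ T, restrict τ S' hS' ∈ C) :
    (∀ S : Finset (Fin d), ∀ hS : S.card = k, ∀ C ∈ 𝒞,
        ∃ x ∈ (T ×ˢ A).image (fun τa => τa.1 ∘ τa.2), restrict x S hS ∈ C) ∧
      ((T ×ˢ A).image (fun τa : (Fin (k ^ 2) → Fin b) × (Fin d → Fin (k ^ 2)) =>
        τa.1 ∘ τa.2)).card ≤ T.card * A.card :=
  ⟨IsRestrictionSolution.image_comp hCinv hA hT,
    Finset.card_image_le.trans (Finset.card_product T A).le⟩

/-- Composing a solution `T` of a `k`-restriction problem (with a permutation-invariant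
collection `𝒞`) in dimension `k²` with a `(d,k,k²)`-splitter `A` yields a solution
`T* = {τ ∘ a}` of the same `k`-restriction problem in dimension `d`, with
`#T* ≤ #T · #A`. -/
theorem stmt_18 (b k d : ℕ) (hb : 2 ≤ b) (hk : 1 ≤ k) (hkd : k ≤ d)
    (𝒞 : Set (Finset (Fin k → Fin b)))
    (hCinv : ∀ C ∈ 𝒞, ∀ σ : Equiv.Perm (Fin k),
      C.image (fun v => v ∘ σ) ∈ 𝒞)
    (A : Finset (Fin d → Fin (k ^ 2)))
    (hA : ∀ S : Finset (Fin d), S.card = k → ∃ a ∈ A, Set.InjOn a S)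
    (T : Finset (Fin (k ^ 2) → Fin b))
    (hT : ∀ S' : Finset (Fin (k ^ 2)), ∀ hS' : S'.card = k, ∀ C ∈ 𝒞,
      ∃ τ ∈ T, restrict τ S' hS' ∈ C) :
    (∀ S : Finset (Fin d), ∀ hS : S.card = k, ∀ C ∈ 𝒞,
        ∃ x ∈ (T ×ˢ A).image (fun τa => τa.1 ∘ τa.2), restrict x S hS ∈ C) ∧
      ((T ×ˢ A).image (fun τa : (Fin (k ^ 2) → Fin b) × (Fin d → Fin (k ^ 2)) =>
        τa.1 ∘ τa.2)).card ≤ T.card * A.card :=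
  stmt_18_general b k d 𝒞 hCinv A hA T hT
end
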